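/- arXiv:2505.10795 — 9 statements merged into one kernel-verified Lean document; each statement's English description precedes it below -/
import Mathlib

section
/- Let n ≥ 1 and let x ∈ ℝⁿ have all coordinates nonnegative. Define A_n(x) = |x − (|x|/√n)·𝟙|² and B_n(x) = Σ_{i,j=1}^{n} (x_i − x_j)², where |·| is the Euclidean norm and 𝟙 ∈ ℝⁿ is the all-ones vector. Then n·A_n(x) ≤ B_n(x) ≤ 2n·A_n(x). -/
/-- The Euclidean norm on `ℝⁿ` (coordinates model). -/
noncomputable def eunorm {n : ℕ} (x : Fin n → ℝ) : ℝ := Real.sqrt (∑ i, (x i) ^ 2)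

/-!
Write `r = |x|`, `s = ⟨x, 𝟙⟩ = ∑ xᵢ` and `u = √n · r = |x| |𝟙|`. Expanding both squares gives
`n A_n(x) = 2u² - 2us` and `B_n(x) = 2u² - 2s²`. Hence `B_n - n A_n = 2s(u - s)` and
`2n A_n - B_n = 2(u - s)²`, and both are nonnegative because `0 ≤ s ≤ u`: the lower bound is
the nonnegativity of the coordinates, the upper one is Cauchy–Schwarz.
-/

open Finset

section Fintype

variable {ι : Type*} [Fintype ι]

theorem sum_sum_sub_sq (x : ι → ℝ) :
    ∑ i, ∑ j, (x i - x j) ^ 2 = 2 * (Fintype.card ι * ∑ i, x i ^ 2 - (∑ i, x i) ^ 2) := by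
  simp only [sub_sq, sum_add_distrib, sum_sub_distrib, sum_const, card_univ, nsmul_eq_mul,
    ← mul_sum, ← sum_mul, mul_assoc]
  ring

theorem sum_sub_const_sq (x : ι → ℝ) (c : ℝ) :
    ∑ i, (x i - c) ^ 2 = ∑ i, x i ^ 2 - 2 * c * ∑ i, x i + Fintype.card ι * c ^ 2 := by
  simp only [sub_sq, sum_add_distrib, sum_sub_distrib, sum_const, card_univ, nsmul_eq_mul,
    ← mul_sum, ← sum_mul]
  ring

end Fintype

section eunorm

variable {n : ℕ}

theorem eunorm_sq (x : Fin n → ℝ) : eunorm x ^ 2 = ∑ i, x i ^ 2 :=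
  Real.sq_sqrt (sum_nonneg fun i _ => sq_nonneg (x i))

theorem eunorm_sub_smul_one_sq (x : Fin n → ℝ) (c : ℝ) :
    eunorm (x - c • fun _ => (1 : ℝ)) ^ 2 = eunorm x ^ 2 - 2 * c * ∑ i, x i + n * c ^ 2 := by
  simp only [eunorm_sq, Pi.sub_apply, Pi.smul_apply, smul_eq_mul, mul_one, sum_sub_const_sq,
    Fintype.card_fin]

theorem sum_le_sqrt_card_mul_eunorm (x : Fin n → ℝ) : ∑ i, x i ≤ √n * eunorm x := by
  rw [eunorm, ← Real.sqrt_mul (Nat.cast_nonneg n)]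
  refine Real.le_sqrt_of_sq_le ?_
  simpa using sq_sum_le_card_mul_sum_sq (s := univ) (f := x)

end eunorm

/-- For `x ∈ ℝⁿ` with nonnegative coordinates, with
`A_n(x) = |x − (|x|/√n)·𝟙|²` and `B_n(x) = Σ_{i,j} (x_i − x_j)²`, one has
`n·A_n(x) ≤ B_n(x) ≤ 2n·A_n(x)`. -/
theorem stmt2 {n : ℕ} (hn : 1 ≤ n) (x : Fin n → ℝ) (hx : ∀ i, 0 ≤ x i) :
    (n : ℝ) * eunorm (x - (eunorm x / Real.sqrt n) • (fun _ => (1 : ℝ))) ^ 2 ≤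
      ∑ i, ∑ j, (x i - x j) ^ 2 ∧
    ∑ i, ∑ j, (x i - x j) ^ 2 ≤
      2 * (n : ℝ) * eunorm (x - (eunorm x / Real.sqrt n) • (fun _ => (1 : ℝ))) ^ 2 := by
  have hsqrt : √(n : ℝ) ^ 2 = n := Real.sq_sqrt (Nat.cast_nonneg n)
  have hsqrt_pos : 0 < √(n : ℝ) := Real.sqrt_pos.2 (by exact_mod_cast hn)
  set u := √(n : ℝ) * eunorm x
  set s := ∑ i, x i
  have hs : 0 ≤ s := sum_nonneg fun i _ => hx i
  have hsu : s ≤ u := sum_le_sqrt_card_mul_eunorm x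
  have hA : (n : ℝ) * eunorm (x - (eunorm x / √(n : ℝ)) • fun _ => (1 : ℝ)) ^ 2
      = 2 * u ^ 2 - 2 * u * s := by
    rw [eunorm_sub_smul_one_sq]
    simp only [u]
    generalize √(n : ℝ) = t at hsqrt hsqrt_pos ⊢
    rw [← hsqrt]
    field_simp
    ring
  have hB : ∑ i, ∑ j, (x i - x j) ^ 2 = 2 * u ^ 2 - 2 * s ^ 2 := by
    rw [sum_sum_sub_sq, Fintype.card_fin, ← eunorm_sq, mul_pow, hsqrt]
    ring
  rw [mul_assoc, hA, hB]
  constructor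
  · nlinarith [mul_nonneg hs (sub_nonneg.2 hsu)]
  · nlinarith [sq_nonneg (u - s)]
end

section
/- Let n ≥ 1 and let K ⊆ ℝⁿ be a closed cone (closed under addition and nonnegative scalar multiplication, with K ∩ (−K) = {0}) satisfying K ⊆ Int(ℝ₊ⁿ) ∪ {0}. Then there exist constants C₂ > C₁ > 0 such that C₁·d(x,w) ≤ |x − w| ≤ C₂·d(x,w) for all x, w ∈ K with |x| = |w| = 1, where |·| is the Euclidean norm and d the Hilbert metric. -/
/-- The Hilbert (projective) metric between two vectors with strictly positive
coordinates: `d(x,y) = log((max_i x_i/y_i)/(min_i x_i/y_i))`. -/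
noncomputable def hilbertDist {n : ℕ} (x y : Fin n → ℝ) : ℝ :=
  Real.log ((⨆ i, x i / y i) / (⨅ i, x i / y i))

lemma abs_coord_le_eunorm {n : ℕ} (x : Fin n → ℝ) (i : Fin n) : |x i| ≤ eunorm x := by
  rw [← Real.sqrt_sq_eq_abs]
  exact Real.sqrt_le_sqrt (Finset.single_le_sum (f := fun j => x j ^ 2)
    (fun j _ => sq_nonneg _) (Finset.mem_univ i))

lemma eunorm_nonneg {n : ℕ} (x : Fin n → ℝ) : 0 ≤ eunorm x := Real.sqrt_nonneg _

lemma continuous_eunorm {n : ℕ} : Continuous (eunorm (n := n)) := by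
  apply Real.continuous_sqrt.comp
  exact continuous_finset_sum _ (fun i _ => (continuous_apply i).pow 2)

lemma one_sub_inv_le_log {x : ℝ} (hx : 0 < x) : 1 - x⁻¹ ≤ Real.log x := by
  have h := Real.log_le_sub_one_of_pos (inv_pos.mpr hx)
  rw [Real.log_inv] at h
  linarith

/-- If `K ⊆ ℝⁿ` is a closed cone with `K ⊆ Int(ℝ₊ⁿ) ∪ {0}`, then there are
constants `C₂ > C₁ > 0` with `C₁·d(x,w) ≤ |x − w| ≤ C₂·d(x,w)` for all `x, w ∈ K` with
`|x| = |w| = 1`. -/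
theorem stmt3 {n : ℕ} (hn : 1 ≤ n) (K : Set (Fin n → ℝ)) (hcl : IsClosed K)
    (hadd : ∀ x ∈ K, ∀ y ∈ K, x + y ∈ K)
    (hsmul : ∀ c : ℝ, 0 ≤ c → ∀ x ∈ K, c • x ∈ K)
    (hprop : ∀ x ∈ K, -x ∈ K → x = 0)
    (hpos : ∀ x ∈ K, x ≠ 0 → ∀ i, 0 < x i) :
    ∃ C₁ C₂ : ℝ, 0 < C₁ ∧ C₁ < C₂ ∧
      ∀ x ∈ K, ∀ w ∈ K, eunorm x = 1 → eunorm w = 1 →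
        C₁ * hilbertDist x w ≤ eunorm (x - w) ∧ eunorm (x - w) ≤ C₂ * hilbertDist x w := by
  haveI : Nonempty (Fin n) := ⟨⟨0, hn⟩⟩
  classical
  set S : Set (Fin n → ℝ) := K ∩ {x | eunorm x = 1} with hS_def
  by_cases hSne : S.Nonempty
  swap
  · refine ⟨1, 2, one_pos, one_lt_two, fun x hx w hw hx1 hw1 => ?_⟩
    exact absurd ⟨hx, hx1⟩ (fun h => hSne ⟨x, h⟩)
  -- S is compact
  have hS_closed : IsClosed S := hcl.inter (isClosed_eq continuous_eunorm continuous_const)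
  have hS_bdd : Bornology.IsBounded S := by
    apply (Metric.isBounded_closedBall (x := (0 : Fin n → ℝ)) (r := 1)).subset
    intro x hx
    rw [Metric.mem_closedBall, dist_zero_right]
    rw [pi_norm_le_iff_of_nonneg zero_le_one]
    intro i
    rw [Real.norm_eq_abs]
    exact (abs_coord_le_eunorm x i).trans_eq hx.2
  have hS_cpt : IsCompact S := Metric.isCompact_of_isClosed_isBounded hS_closed hS_bdd
  -- the set of all coordinates of elements of S
  set T : Set ℝ := ⋃ i : Fin n, (fun x : Fin n → ℝ => x i) '' S with hT_def
  have hT_cpt : IsCompact T := isCompact_iUnion (fun i => hS_cpt.image (continuous_apply i))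
  have hT_ne : T.Nonempty := by
    obtain ⟨x, hx⟩ := hSne
    exact ⟨x ⟨0, hn⟩, Set.mem_iUnion.mpr ⟨⟨0, hn⟩, ⟨x, hx, rfl⟩⟩⟩
  set m : ℝ := sInf T with hm_def
  have hm_mem : m ∈ T := hT_cpt.sInf_mem hT_ne
  -- basic facts about elements of S
  have hSne' : ∀ x ∈ S, x ≠ 0 := by
    rintro x ⟨hxK, hx1⟩ rfl
    simp only [Set.mem_setOf_eq, eunorm] at hx1
    simp at hx1
  have hS_coord_pos : ∀ x ∈ S, ∀ i, 0 < x i :=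
    fun x hx i => hpos x hx.1 (hSne' x hx) i
  have hS_coord_le_one : ∀ x ∈ S, ∀ i, x i ≤ 1 := by
    intro x hx i
    exact (le_abs_self _).trans ((abs_coord_le_eunorm x i).trans_eq hx.2)
  have hm_pos : 0 < m := by
    obtain ⟨i, x, hxS, hxi⟩ := Set.mem_iUnion.mp hm_mem
    exact hxi ▸ hS_coord_pos x hxS i
  have hm_le : ∀ x ∈ S, ∀ i, m ≤ x i := by
    intro x hx i
    exact csInf_le hT_cpt.bddBelow (Set.mem_iUnion.mpr ⟨i, x, hx, rfl⟩)
  have hm_le_one : m ≤ 1 := by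
    obtain ⟨i, x, hxS, hxi⟩ := Set.mem_iUnion.mp hm_mem
    exact hxi ▸ hS_coord_le_one x hxS i
  have hsqrtn : (1 : ℝ) ≤ Real.sqrt n := by
    rw [show (1:ℝ) = Real.sqrt 1 by simp]
    exact Real.sqrt_le_sqrt (by exact_mod_cast hn)
  refine ⟨m / 2, Real.sqrt n / m, by positivity, ?_, ?_⟩
  · have h1 : (1:ℝ) ≤ Real.sqrt n / m := by
      rw [le_div_iff₀ hm_pos, one_mul]
      exact hm_le_one.trans hsqrtn
    linarith
  intro x hxK w hwK hx1 hw1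
  have hxS : x ∈ S := ⟨hxK, hx1⟩
  have hwS : w ∈ S := ⟨hwK, hw1⟩
  have hx1' : ∑ i, x i ^ 2 = 1 := by
    have := hx1
    rw [eunorm, Real.sqrt_eq_one] at this
    exact this
  have hw1' : ∑ i, w i ^ 2 = 1 := by
    have := hw1
    rw [eunorm, Real.sqrt_eq_one] at this
    exact this
  set r : Fin n → ℝ := fun i => x i / w i with hr_def
  have hr_pos : ∀ i, 0 < r i := fun i =>
    div_pos (hS_coord_pos x hxS i) (hS_coord_pos w hwS i)
  set s : ℝ := ⨆ i, r i with hs_def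
  set t : ℝ := ⨅ i, r i with ht_def
  obtain ⟨i₀, hi₀⟩ := Finite.exists_max r
  obtain ⟨j₀, hj₀⟩ := Finite.exists_min r
  have hs_eq : s = r i₀ :=
    le_antisymm (ciSup_le hi₀) (le_ciSup (Set.Finite.bddAbove (Set.finite_range r)) i₀)
  have ht_eq : t = r j₀ :=
    le_antisymm (ciInf_le (Set.Finite.bddBelow (Set.finite_range r)) j₀)
      (le_ciInf hj₀)
  have hr_le_s : ∀ i, r i ≤ s := fun i => hs_eq ▸ hi₀ i
  have ht_le_r : ∀ i, t ≤ r i := fun i => ht_eq ▸ hj₀ i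
  have hs_pos : 0 < s := hs_eq ▸ hr_pos i₀
  have ht_pos : 0 < t := ht_eq ▸ hr_pos j₀
  have h1_le_s : 1 ≤ s := by
    by_contra h
    push_neg at h
    have hlt : ∀ i, x i ^ 2 < w i ^ 2 := by
      intro i
      have : x i < w i := by
        have := (hr_le_s i).trans_lt h
        rw [hr_def, div_lt_one (hS_coord_pos w hwS i)] at this
        exact this
      exact pow_lt_pow_left₀ this (hS_coord_pos x hxS i).le (by norm_num)
    have : (∑ i, x i ^ 2) < ∑ i, w i ^ 2 :=
      Finset.sum_lt_sum_of_nonempty Finset.univ_nonempty (fun i _ => hlt i)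
    rw [hx1', hw1'] at this
    exact lt_irrefl 1 this
  have ht_le_1 : t ≤ 1 := by
    by_contra h
    push_neg at h
    have hlt : ∀ i, w i ^ 2 < x i ^ 2 := by
      intro i
      have : w i < x i := by
        have := h.trans_le (ht_le_r i)
        rw [hr_def, lt_div_iff₀ (hS_coord_pos w hwS i), one_mul] at this
        exact this
      exact pow_lt_pow_left₀ this (hS_coord_pos w hwS i).le (by norm_num)
    have : (∑ i, w i ^ 2) < ∑ i, x i ^ 2 :=
      Finset.sum_lt_sum_of_nonempty Finset.univ_nonempty (fun i _ => hlt i)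
    rw [hx1', hw1'] at this
    exact lt_irrefl 1 this
  have hs_ub : s ≤ 1 / m := by
    rw [hs_eq, hr_def]
    exact div_le_div₀ zero_le_one (hS_coord_le_one x hxS i₀) hm_pos (hm_le w hwS i₀)
  have ht_lb : m ≤ t := by
    rw [ht_eq, hr_def]
    calc m = m / 1 := (div_one m).symm
    _ ≤ x j₀ / w j₀ := div_le_div₀ (hS_coord_pos x hxS j₀).le (hm_le x hxS j₀)
        (hS_coord_pos w hwS j₀) (hS_coord_le_one w hwS j₀)
  have hd_eq : hilbertDist x w = Real.log s - Real.log t := by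
    rw [hilbertDist, ← hs_def, ← ht_def, Real.log_div hs_pos.ne' ht_pos.ne']
  have hlogs_nonneg : 0 ≤ Real.log s := Real.log_nonneg h1_le_s
  have hlogt_nonpos : Real.log t ≤ 0 := Real.log_nonpos ht_pos.le ht_le_1
  have hd_nonneg : 0 ≤ hilbertDist x w := by rw [hd_eq]; linarith
  set E : ℝ := eunorm (x - w) with hE_def
  have hE_nonneg : 0 ≤ E := eunorm_nonneg _
  have hcoordE : ∀ i, |x i - w i| ≤ E := by
    intro i
    have := abs_coord_le_eunorm (x - w) i
    simpa using this
  constructor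
  · -- lower bound : (m/2) * d ≤ E
    have h1 : Real.log s ≤ E / m := by
      have h2 : Real.log s ≤ s - 1 := Real.log_le_sub_one_of_pos hs_pos
      have h3 : s - 1 = (x i₀ - w i₀) / w i₀ := by
        rw [hs_eq, hr_def]
        have hw0 := (hS_coord_pos w hwS i₀).ne'
        field_simp
      have h4 : (x i₀ - w i₀) / w i₀ ≤ E / m := by
        apply div_le_div₀ hE_nonneg ((le_abs_self _).trans (hcoordE i₀)) hm_pos
          (hm_le w hwS i₀)
      linarith
    have h5 : -Real.log t ≤ E / m := by
      have h6 : Real.log t⁻¹ ≤ t⁻¹ - 1 := Real.log_le_sub_one_of_pos (inv_pos.mpr ht_pos)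
      rw [Real.log_inv] at h6
      have h7 : t⁻¹ - 1 = (w j₀ - x j₀) / x j₀ := by
        rw [ht_eq, hr_def]
        have := (hS_coord_pos x hxS j₀).ne'
        have := (hS_coord_pos w hwS j₀).ne'
        field_simp
      have h8 : (w j₀ - x j₀) / x j₀ ≤ E / m := by
        apply div_le_div₀ hE_nonneg ?_ hm_pos (hm_le x hxS j₀)
        calc w j₀ - x j₀ ≤ |w j₀ - x j₀| := le_abs_self _
        _ = |x j₀ - w j₀| := abs_sub_comm _ _
        _ ≤ E := hcoordE j₀
      linarith
    have hEm : m * (E / m) = E := by field_simp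
    have ha := mul_le_mul_of_nonneg_left h1 hm_pos.le
    have hb := mul_le_mul_of_nonneg_left h5 hm_pos.le
    rw [hEm] at ha hb
    rw [hd_eq]
    nlinarith
  · -- upper bound : E ≤ (√n / m) * d
    set d : ℝ := hilbertDist x w with hd_def
    set B : ℝ := (1 / m) * d with hB_def
    have hB_nonneg : 0 ≤ B := by positivity
    have h1m : (1:ℝ) ≤ 1 / m := by
      rw [le_div_iff₀ hm_pos, one_mul]; exact hm_le_one
    have hlogs_le_d : Real.log s ≤ d := by rw [hd_eq]; linarith
    have hnlogt_le_d : -Real.log t ≤ d := by rw [hd_eq]; linarith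
    have hsB : s - 1 ≤ B := by
      have h2 : 1 - s⁻¹ ≤ Real.log s := one_sub_inv_le_log hs_pos
      have h3 : s - 1 ≤ s * Real.log s := by
        have := mul_le_mul_of_nonneg_left h2 hs_pos.le
        rw [mul_sub, mul_one, mul_inv_cancel₀ hs_pos.ne'] at this
        linarith
      have h4 : s * Real.log s ≤ (1 / m) * Real.log s :=
        mul_le_mul_of_nonneg_right hs_ub hlogs_nonneg
      have h5 : (1 / m) * Real.log s ≤ (1 / m) * d :=
        mul_le_mul_of_nonneg_left hlogs_le_d (by positivity)
      rw [hB_def]; linarith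
    have htB : 1 - t ≤ B := by
      have h2 : 1 - t ≤ -Real.log t := by
        have := Real.log_le_sub_one_of_pos ht_pos
        linarith
      have h3 : -Real.log t ≤ (1/m) * d := by
        calc -Real.log t ≤ d := hnlogt_le_d
        _ = 1 * d := (one_mul d).symm
        _ ≤ (1/m) * d := mul_le_mul_of_nonneg_right h1m hd_nonneg
      rw [hB_def]; linarith
    have hcoordB : ∀ i, |x i - w i| ≤ B := by
      intro i
      rw [abs_le]
      constructor
      · -- -(B) ≤ x i - w i, i.e. w i - x i ≤ B
        have h2 : w i * t ≤ x i := by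
          have := ht_le_r i
          rw [hr_def] at this
          rw [← le_div_iff₀' (hS_coord_pos w hwS i)]
          exact this
        have h3 : w i - x i ≤ w i * (1 - t) := by rw [mul_sub, mul_one]; linarith
        have h4 : w i * (1 - t) ≤ 1 - t :=
          mul_le_of_le_one_left (by linarith) (hS_coord_le_one w hwS i)
        linarith [htB]
      · have h2 : x i ≤ w i * s := by
          have := hr_le_s i
          rw [hr_def, div_le_iff₀ (hS_coord_pos w hwS i)] at this
          linarith [this]
        have h3 : x i - w i ≤ w i * (s - 1) := by rw [mul_sub, mul_one]; linarith
        have h4 : w i * (s - 1) ≤ s - 1 :=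
          mul_le_of_le_one_left (by linarith) (hS_coord_le_one w hwS i)
        linarith [hsB]
    have hxw : ∀ i, (x - w) i = x i - w i := fun i => rfl
    have hE_le : E ≤ Real.sqrt n * B := by
      rw [hE_def, eunorm]
      have hsum : (∑ i, ((x - w) i) ^ 2) ≤ ∑ _i : Fin n, B ^ 2 := by
        refine Finset.sum_le_sum (fun i _ => ?_)
        rw [hxw, ← sq_abs]
        exact pow_le_pow_left₀ (abs_nonneg _) (hcoordB i) 2
      calc Real.sqrt (∑ i, ((x - w) i) ^ 2) ≤ Real.sqrt (∑ _i : Fin n, B ^ 2) :=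
            Real.sqrt_le_sqrt hsum
      _ = Real.sqrt ((n : ℝ) * B ^ 2) := by
            rw [Finset.sum_const, Finset.card_univ, Fintype.card_fin, nsmul_eq_mul]
      _ = Real.sqrt n * B := by
            rw [Real.sqrt_mul (by positivity), Real.sqrt_sq hB_nonneg]
    calc E ≤ Real.sqrt n * B := hE_le
    _ = Real.sqrt n / m * d := by rw [hB_def]; ring
end

section
/- Let n ≥ 2 and define α(γ) = ln(1 − n + n/(1 − √n·γ)²) for γ ∈ [0, 1/√n). Then for every ε₀ ∈ (0, 1/√n) and every C ∈ (0,1) there exists k ∈ (0,1) such that α(C·γ) ≤ k·α(γ) for all γ ∈ [0, ε₀]. Consequently α(Cᵐ·γ) ≤ kᵐ·α(γ) for every positive integer m and γ ∈ [0, ε₀]. -/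
/-- `α(γ) = log(1 − n + n/(1 − √n·γ)²)`. -/
noncomputable def alphaFun (n : ℕ) (γ : ℝ) : ℝ :=
  Real.log (1 - (n : ℝ) + (n : ℝ) / (1 - Real.sqrt n * γ) ^ 2)

/-- For `0 < x ≤ X` and `C ∈ (0,1)`: `log(1+Cx) ≤ (1-(1-C)/(1+X))·log(1+x)`. -/
lemma log_step {C x X : ℝ} (hC0 : 0 < C) (hC1 : C < 1) (hx : 0 < x) (hxX : x ≤ X) :
    Real.log (1 + C * x) ≤ (1 - (1 - C) / (1 + X)) * Real.log (1 + x) := by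
  have hX : 0 < X := lt_of_lt_of_le hx hxX
  have h1x : (0:ℝ) < 1 + x := by linarith
  have h1cx : (0:ℝ) < 1 + C * x := by nlinarith
  have h1 : Real.log (1 + x) ≤ x := by
    have := Real.log_le_sub_one_of_pos h1x
    linarith
  have h2 : (1 - C) * x / (1 + x) ≤ Real.log (1 + x) - Real.log (1 + C * x) := by
    have hq : (0:ℝ) < (1 + C * x) / (1 + x) := div_pos h1cx h1x
    have := Real.log_le_sub_one_of_pos hq
    rw [Real.log_div h1cx.ne' h1x.ne'] at this
    have he : (1 + C * x) / (1 + x) - 1 = -((1 - C) * x / (1 + x)) := by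
      field_simp
      ring
    rw [he] at this
    linarith
  have hlog0 : 0 ≤ Real.log (1 + x) := Real.log_nonneg (by linarith)
  have h3 : (1 - C) / (1 + X) * Real.log (1 + x) ≤ (1 - C) * x / (1 + x) := by
    have hXpos : (0:ℝ) < 1 + X := by linarith
    have ha : (1 - C) / (1 + X) * Real.log (1 + x) ≤ (1 - C) / (1 + X) * x :=
      mul_le_mul_of_nonneg_left h1 (div_nonneg (by linarith) (by linarith))
    have hb : (1 - C) / (1 + X) * x ≤ (1 - C) * x / (1 + x) := by
      rw [div_mul_eq_mul_div, div_le_div_iff₀ hXpos h1x]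
      nlinarith [mul_nonneg (mul_nonneg (show (0:ℝ) ≤ 1 - C by linarith) hx.le)
        (sub_nonneg.2 hxX)]
    linarith
  nlinarith

lemma alphaFun_zero (n : ℕ) : alphaFun n 0 = 0 := by
  simp [alphaFun]

set_option maxHeartbeats 1000000 in
/-- Pointwise contraction step. -/
lemma alpha_step {n : ℕ} (hn : 2 ≤ n) {ε₀ C : ℝ} (hε0 : 0 < ε₀)
    (hε1 : Real.sqrt n * ε₀ < 1) (hC0 : 0 < C) (hC1 : C < 1) {γ : ℝ}
    (hγ0 : 0 ≤ γ) (hγε : γ ≤ ε₀) :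
    alphaFun n (C * γ) ≤
      (1 - (1 - C) / (1 + ((n : ℝ) / (1 - Real.sqrt n * ε₀) ^ 2 - n))) * alphaFun n γ := by
  have hn2 : (2:ℝ) ≤ (n:ℝ) := by exact_mod_cast hn
  have hn0 : (0:ℝ) ≤ (n:ℝ) := by linarith
  have hs : 0 < Real.sqrt n := Real.sqrt_pos.2 (by positivity)
  set X : ℝ := (n : ℝ) / (1 - Real.sqrt n * ε₀) ^ 2 - n with hXd
  have hsε : 0 < Real.sqrt n * ε₀ := mul_pos hs hε0
  have hden0 : (0:ℝ) < 1 - Real.sqrt n * ε₀ := by linarith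
  have hdensq : (0:ℝ) < (1 - Real.sqrt n * ε₀) ^ 2 := by positivity
  have hX : 0 < X := by
    rw [hXd, sub_pos, lt_div_iff₀ hdensq]
    nlinarith [mul_pos (show (0:ℝ) < (n:ℝ) by linarith)
      (mul_pos hsε (show (0:ℝ) < 2 - Real.sqrt n * ε₀ by linarith))]
  rcases eq_or_lt_of_le hγ0 with h0 | h0
  · rw [← h0]
    simp [alphaFun_zero]
  · -- γ > 0
    set t : ℝ := Real.sqrt n * γ with htd
    have ht0 : 0 < t := mul_pos hs h0
    have htε : t ≤ Real.sqrt n * ε₀ := mul_le_mul_of_nonneg_left hγε hs.le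
    have ht1 : t < 1 := by linarith
    have h1t : (0:ℝ) < 1 - t := by linarith
    have hct1 : C * t < 1 := by nlinarith
    have hct0 : 0 < C * t := mul_pos hC0 ht0
    have hat : C * t < t := by nlinarith
    have h1a : (0:ℝ) < 1 - C * t := by linarith
    set x : ℝ := (n : ℝ) / (1 - t) ^ 2 - n with hxd
    have hx : 0 < x := by
      rw [hxd, sub_pos, lt_div_iff₀ (by positivity)]
      nlinarith [mul_pos (show (0:ℝ) < (n:ℝ) by linarith)
        (mul_pos ht0 (show (0:ℝ) < 2 - t by linarith))]
    have hxX : x ≤ X := by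
      rw [hxd, hXd, sub_le_sub_iff_right]
      exact div_le_div_of_nonneg_left hn0 (by positivity) (by nlinarith)
    clear_value x t X
    -- the polynomial core
    have h3' : (0:ℝ) ≤ 3 - 2 * t - 2 * (C * t) + C * t * t := by
      nlinarith [mul_nonneg (show (0:ℝ) ≤ 2 - t by linarith)
        (show (0:ℝ) ≤ 1 - C * t by linarith)]
    have hcore : (n : ℝ) / (1 - C * t) ^ 2 - n ≤ C * x := by
      have e1 : (n : ℝ) / (1 - C * t) ^ 2 - n
          = (n : ℝ) * ((C * t) * (2 - C * t)) / (1 - C * t) ^ 2 := by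
        field_simp
        ring
      have e2 : C * x = (n : ℝ) * (C * (t * (2 - t))) / (1 - t) ^ 2 := by
        rw [hxd]
        field_simp
        ring
      rw [e1, e2, div_le_div_iff₀ (by positivity) (by positivity)]
      have key : (0:ℝ) ≤ (n : ℝ) * (C * t * ((t - C * t) *
          (3 - 2 * t - 2 * (C * t) + C * t * t))) :=
        mul_nonneg hn0 (mul_nonneg hct0.le (mul_nonneg (by linarith) h3'))
      nlinarith [key, sq_nonneg (1 - C * t), sq_nonneg (1 - t)]
    have geq1 : alphaFun n (C * γ) = Real.log (1 + ((n : ℝ) / (1 - C * t) ^ 2 - n)) := by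
      rw [alphaFun, show Real.sqrt n * (C * γ) = C * t by rw [htd]; ring]
      congr 1
      ring
    have geq2 : alphaFun n γ = Real.log (1 + x) := by
      rw [alphaFun, ← htd, hxd]
      congr 1
      ring
    have hargpos : (0:ℝ) < 1 + ((n:ℝ) / (1 - C * t) ^ 2 - n) := by
      have : (n:ℝ) ≤ (n:ℝ) / (1 - C * t) ^ 2 := by
        rw [le_div_iff₀ (by positivity)]
        nlinarith [mul_nonneg hn0 (mul_nonneg hct0.le (show (0:ℝ) ≤ 2 - C * t by linarith))]
      linarith
    rw [geq1, geq2]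
    calc Real.log (1 + ((n : ℝ) / (1 - C * t) ^ 2 - n))
        ≤ Real.log (1 + C * x) := Real.log_le_log hargpos (by linarith)
      _ ≤ (1 - (1 - C) / (1 + X)) * Real.log (1 + x) := log_step hC0 hC1 hx hxX

/-- for every `ε₀ ∈ (0, 1/√n)` and `C ∈ (0,1)` there is `k ∈ (0,1)` with
`α(C·γ) ≤ k·α(γ)` on `[0, ε₀]`; consequently `α(Cᵐ·γ) ≤ kᵐ·α(γ)` for all `m ≥ 1`. -/
theorem stmt7 {n : ℕ} (hn : 2 ≤ n) :
    ∀ ε₀ ∈ Set.Ioo 0 (1 / Real.sqrt n), ∀ C ∈ Set.Ioo (0 : ℝ) 1,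
      ∃ k ∈ Set.Ioo (0 : ℝ) 1,
        (∀ γ ∈ Set.Icc 0 ε₀, alphaFun n (C * γ) ≤ k * alphaFun n γ) ∧
        ∀ m : ℕ, 0 < m → ∀ γ ∈ Set.Icc 0 ε₀,
          alphaFun n (C ^ m * γ) ≤ k ^ m * alphaFun n γ := by
  intro ε₀ hε C hC
  obtain ⟨hε0, hεlt⟩ := hε
  obtain ⟨hC0, hC1⟩ := hC
  have hn2 : (2:ℝ) ≤ (n:ℝ) := by exact_mod_cast hn
  have hs : 0 < Real.sqrt n := Real.sqrt_pos.2 (by positivity)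
  have hε1 : Real.sqrt n * ε₀ < 1 := by
    have := (lt_div_iff₀ hs).1 hεlt
    linarith
  set X : ℝ := (n : ℝ) / (1 - Real.sqrt n * ε₀) ^ 2 - n with hXd
  have hsε : 0 < Real.sqrt n * ε₀ := mul_pos hs hε0
  have hden0 : (0:ℝ) < 1 - Real.sqrt n * ε₀ := by linarith
  have hX : 0 < X := by
    rw [hXd, sub_pos, lt_div_iff₀ (by positivity)]
    nlinarith [mul_pos (show (0:ℝ) < (n:ℝ) by linarith)
      (mul_pos hsε (show (0:ℝ) < 2 - Real.sqrt n * ε₀ by linarith))]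
  set k : ℝ := 1 - (1 - C) / (1 + X) with hkd
  have hfrac0 : 0 < (1 - C) / (1 + X) := div_pos (by linarith) (by linarith)
  have hfrac1 : (1 - C) / (1 + X) < 1 := by
    rw [div_lt_one (by linarith)]
    linarith
  have hk0 : 0 < k := by rw [hkd]; linarith
  have hk1 : k < 1 := by rw [hkd]; linarith
  have hstep : ∀ γ ∈ Set.Icc (0:ℝ) ε₀, alphaFun n (C * γ) ≤ k * alphaFun n γ := by
    intro γ hγ
    obtain ⟨hγ0, hγε⟩ := hγ
    exact alpha_step hn hε0 hε1 hC0 hC1 hγ0 hγε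
  refine ⟨k, ⟨hk0, hk1⟩, hstep, ?_⟩
  intro m hm γ hγ
  obtain ⟨hγ0, hγε⟩ := hγ
  clear hm
  induction m with
  | zero => simp
  | succ m ih =>
    have hCm0 : (0:ℝ) ≤ C ^ m := by positivity
    have hCm1 : C ^ m ≤ 1 := pow_le_one₀ hC0.le hC1.le
    have hmem : C ^ m * γ ∈ Set.Icc (0:ℝ) ε₀ := by
      constructor
      · positivity
      · nlinarith
    have h1 : alphaFun n (C * (C ^ m * γ)) ≤ k * alphaFun n (C ^ m * γ) :=
      hstep _ hmem
    have h2 : k * alphaFun n (C ^ m * γ) ≤ k * (k ^ m * alphaFun n γ) :=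
      mul_le_mul_of_nonneg_left ih hk0.le
    calc alphaFun n (C ^ (m+1) * γ)
        = alphaFun n (C * (C ^ m * γ)) := by rw [show C ^ (m+1) * γ = C * (C ^ m * γ) by ring]
      _ ≤ k * (k ^ m * alphaFun n γ) := le_trans h1 h2
      _ = k ^ (m+1) * alphaFun n γ := by ring
end

section
/- Let n ≥ 2, let A be an n×n matrix with all entries nonnegative and with A𝟙 = 𝟙 (each row sums to 1), and suppose there exist δ ∈ (0,1) and an index ℓ such that A_{iℓ} > δ for every i. Let e ∈ ℝⁿ satisfy 1/√n − ε ≤ e_i ≤ 1/√n for all i, where 0 < ε < 1/√n, and write ẽ_i = 1/√n − e_i. Then for every index i: 1/√n − ε(1 − δ) − δ·ẽ_ℓ ≤ (Ae)_i ≤ 1/√n − δ·ẽ_ℓ, and consequently |Ae| ≤ 1 − √n·δ·ẽ_ℓ, where |·| is the Euclidean norm. -/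
/-- coordinatewise bounds on `Ae` and the norm bound
`|Ae| ≤ 1 − √n·δ·ẽ_ℓ`, where `ẽ_i = 1/√n − e_i`. -/
theorem stmt8 {n : ℕ} (hn : 2 ≤ n) (A : Matrix (Fin n) (Fin n) ℝ)
    (hA : ∀ i j, 0 ≤ A i j) (hrow : ∀ i, ∑ j, A i j = 1)
    (δ : ℝ) (hδ : δ ∈ Set.Ioo (0 : ℝ) 1) (l : Fin n) (hl : ∀ i, δ < A i l)
    (ε : ℝ) (hε0 : 0 < ε) (hε : ε < 1 / Real.sqrt n)
    (e : Fin n → ℝ) (he : ∀ i, 1 / Real.sqrt n - ε ≤ e i ∧ e i ≤ 1 / Real.sqrt n) :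
    (∀ i, 1 / Real.sqrt n - ε * (1 - δ) - δ * (1 / Real.sqrt n - e l) ≤ A.mulVec e i ∧
        A.mulVec e i ≤ 1 / Real.sqrt n - δ * (1 / Real.sqrt n - e l)) ∧
    eunorm (A.mulVec e) ≤ 1 - Real.sqrt n * δ * (1 / Real.sqrt n - e l) := by
  obtain ⟨hδ0, hδ1⟩ := hδ
  have hn0 : (0:ℝ) < n := by positivity
  have hsn : (0:ℝ) < Real.sqrt n := Real.sqrt_pos.2 hn0
  set s : ℝ := 1 / Real.sqrt n with hs
  set t : ℝ := s - e l with htdef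
  have ht0 : 0 ≤ t := by have := (he l).2; simp only [htdef]; linarith
  have htε : t ≤ ε := by have := (he l).1; simp only [htdef]; linarith
  have key : ∀ i, A.mulVec e i = s - ∑ j, A i j * (s - e j) := by
    intro i
    simp only [Matrix.mulVec, dotProduct, mul_sub, Finset.sum_sub_distrib,
      ← Finset.sum_mul, hrow i, one_mul]
    ring
  have coord : ∀ i, s - ε * (1 - δ) - δ * t ≤ A.mulVec e i ∧
      A.mulVec e i ≤ s - δ * t := by
    intro i
    have hBlow : δ * t ≤ ∑ j, A i j * (s - e j) := by
      have h1 : A i l * t ≤ ∑ j, A i j * (s - e j) := by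
        have := Finset.single_le_sum (f := fun j => A i j * (s - e j))
          (fun j _ => mul_nonneg (hA i j) (by have := (he j).2; linarith))
          (Finset.mem_univ l)
        simpa [htdef] using this
      nlinarith [hl i]
    have hBhigh : ∑ j, A i j * (s - e j) ≤ ε * (1 - δ) + δ * t := by
      have hsplit : ∑ j, A i j * (s - e j) =
          A i l * t + ∑ j ∈ Finset.univ.erase l, A i j * (s - e j) := by
        rw [htdef, ← Finset.add_sum_erase _ _ (Finset.mem_univ l)]
      have hrest : ∑ j ∈ Finset.univ.erase l, A i j * (s - e j) ≤
          (1 - A i l) * ε := by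
        calc ∑ j ∈ Finset.univ.erase l, A i j * (s - e j)
            ≤ ∑ j ∈ Finset.univ.erase l, A i j * ε := by
              apply Finset.sum_le_sum
              intro j _
              exact mul_le_mul_of_nonneg_left (by have := (he j).1; linarith) (hA i j)
          _ = (1 - A i l) * ε := by
              rw [← Finset.sum_mul]
              have : ∑ j ∈ Finset.univ.erase l, A i j = 1 - A i l := by
                have := Finset.add_sum_erase _ (A i) (Finset.mem_univ l)
                rw [hrow i] at this
                linarith
              rw [this]
      rw [hsplit]
      nlinarith [hl i]
    constructor
    · rw [key i]; linarith
    · rw [key i]; linarith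
  refine ⟨coord, ?_⟩
  have hub : ∀ i, A.mulVec e i ≤ s - δ * t := fun i => (coord i).2
  have hlb0 : ∀ i, 0 ≤ A.mulVec e i := by
    intro i
    have := (coord i).1
    nlinarith
  have hsq : ∑ i, (A.mulVec e i) ^ 2 ≤ (n : ℝ) * (s - δ * t) ^ 2 := by
    calc ∑ i, (A.mulVec e i) ^ 2 ≤ ∑ _i : Fin n, (s - δ * t) ^ 2 := by
          apply Finset.sum_le_sum
          intro i _
          exact pow_le_pow_left₀ (hlb0 i) (hub i) 2
      _ = (n : ℕ) • (s - δ * t) ^ 2 := by rw [Finset.sum_const, Finset.card_univ, Fintype.card_fin]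
      _ = (n : ℝ) * (s - δ * t) ^ 2 := by rw [nsmul_eq_mul]
  have hc0 : 0 ≤ s - δ * t := by nlinarith
  have : eunorm (A.mulVec e) ≤ Real.sqrt ((n : ℝ) * (s - δ * t) ^ 2) := by
    exact Real.sqrt_le_sqrt hsq
  have heq : Real.sqrt ((n : ℝ) * (s - δ * t) ^ 2) = Real.sqrt n * (s - δ * t) := by
    rw [Real.sqrt_mul (le_of_lt hn0), Real.sqrt_sq hc0]
  have hfin : Real.sqrt n * (s - δ * t) = 1 - Real.sqrt n * δ * t := by
    have : Real.sqrt n * s = 1 := by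
      rw [hs]; field_simp
    nlinarith [this]
  rw [heq, hfin] at this
  simpa [htdef] using this
end

section
/- Let n ≥ 2, let A be an n×n matrix with all entries nonnegative and with A𝟙 = 𝟙, and suppose there exist δ ∈ (0,1) and an index ℓ such that A_{iℓ} > δ for every i. Then for every ε ∈ (0, 1/√n) there exists a constant c ∈ (0,1) such that diam(Aᵐ·K(ε)) ≤ cᵐ · diam(K(ε)) for every positive integer m, where diam denotes the Hilbert diameter. -/
/-- The Hilbert diameter of a set whose nonzero elements have strictly positive
coordinates: `diam S = sup{d(x,y) : x, y ∈ S, x ≠ 0, y ≠ 0}`. -/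
noncomputable def hilbertDiam {n : ℕ} (S : Set (Fin n → ℝ)) : ℝ :=
  sSup {d : ℝ | ∃ x ∈ S, ∃ y ∈ S, x ≠ 0 ∧ y ≠ 0 ∧ d = hilbertDist x y}

/-- The cone `K(γ) = {x ∈ ℝⁿ : x_i ≥ (1/√n − γ)·|x| for every i}`. -/
noncomputable def Kcone (n : ℕ) (γ : ℝ) : Set (Fin n → ℝ) :=
  {x | ∀ i, (1 / Real.sqrt n - γ) * eunorm x ≤ x i}

/- ------------------------- auxiliary lemmas ------------------------- -/

lemma aux_coord_le_eunorm {n : ℕ} (x : Fin n → ℝ) (hx : ∀ i, 0 ≤ x i) (j : Fin n) :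
    x j ≤ eunorm x := by
  have h1 : x j ^ 2 ≤ ∑ i, (x i) ^ 2 :=
    Finset.single_le_sum (fun i _ => sq_nonneg (x i)) (Finset.mem_univ j)
  calc x j = Real.sqrt (x j ^ 2) := by rw [Real.sqrt_sq (hx j)]
    _ ≤ eunorm x := Real.sqrt_le_sqrt h1

lemma aux_eunorm_pos {n : ℕ} (x : Fin n → ℝ) (hx : x ≠ 0) : 0 < eunorm x := by
  obtain ⟨j, hj⟩ : ∃ j, x j ≠ 0 := by
    by_contra h
    push_neg at h
    exact hx (funext h)
  have h1 : 0 < ∑ i, (x i) ^ 2 := by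
    have h0 : (0:ℝ) < x j ^ 2 := by positivity
    have h2 : x j ^ 2 ≤ ∑ i, (x i) ^ 2 :=
      Finset.single_le_sum (fun i _ => sq_nonneg (x i)) (Finset.mem_univ j)
    linarith
  exact Real.sqrt_pos.mpr h1

/-- positivity is preserved by a stochastic-type step with a positive column. -/
lemma aux_step_pos {n : ℕ} (A : Matrix (Fin n) (Fin n) ℝ) (hA : ∀ i j, 0 ≤ A i j)
    (δ : ℝ) (hδ0 : 0 < δ) (l : Fin n) (hl : ∀ i, δ ≤ A i l)
    (y : Fin n → ℝ) (hy : ∀ i, 0 < y i) : ∀ i, 0 < A.mulVec y i := by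
  intro i
  have h1 : A i l * y l ≤ ∑ j, A i j * y j :=
    Finset.single_le_sum (fun j _ => mul_nonneg (hA i j) (hy j).le) (Finset.mem_univ l)
  have h2 : 0 < A i l * y l := mul_pos (lt_of_lt_of_le hδ0 (hl i)) (hy l)
  have h3 : A.mulVec y i = ∑ j, A i j * y j := rfl
  linarith

/-- the "Good" (bounded ratio) property is preserved by a row-stochastic step. -/
lemma aux_step_good {n : ℕ} (A : Matrix (Fin n) (Fin n) ℝ) (hA : ∀ i j, 0 ≤ A i j)
    (hrow : ∀ i, ∑ j, A i j = 1) (γ : ℝ) (hγ : 0 ≤ γ) (y : Fin n → ℝ)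
    (hG : ∀ i j, γ * y j ≤ y i) :
    ∀ i j, γ * A.mulVec y j ≤ A.mulVec y i := by
  intro i j
  have h1 : ∀ k, γ * y k ≤ A.mulVec y i := by
    intro k
    calc γ * y k = ∑ m, A i m * (γ * y k) := by
          rw [← Finset.sum_mul, hrow i, one_mul]
      _ ≤ ∑ m, A i m * y m :=
          Finset.sum_le_sum fun m _ => mul_le_mul_of_nonneg_left (hG m k) (hA i m)
      _ = A.mulVec y i := rfl
  calc γ * A.mulVec y j = ∑ k, A j k * (γ * y k) := by
        show γ * ∑ k, A j k * y k = _
        rw [Finset.mul_sum]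
        exact Finset.sum_congr rfl fun k _ => by ring
    _ ≤ ∑ k, A j k * A.mulVec y i :=
        Finset.sum_le_sum fun k _ => mul_le_mul_of_nonneg_left (h1 k) (hA j k)
    _ = A.mulVec y i := by rw [← Finset.sum_mul, hrow j, one_mul]

/-- the core one-step contraction estimate on coordinatewise ratios. -/
lemma aux_step_core {n : ℕ} (A : Matrix (Fin n) (Fin n) ℝ) (hA : ∀ i j, 0 ≤ A i j)
    (hrow : ∀ i, ∑ j, A i j = 1) (δ γ : ℝ) (hδ0 : 0 < δ) (l : Fin n)
    (hl : ∀ i, δ ≤ A i l) (hγ0 : 0 < γ) (x y : Fin n → ℝ)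
    (hy : ∀ i, 0 < y i) (hG : ∀ i j, γ * y j ≤ y i) (m M : ℝ)
    (hm : ∀ j, m * y j ≤ x j) (hM : ∀ j, x j ≤ M * y j) (i : Fin n) :
    ((1 - δ*γ)*m + δ*γ*(x l / y l)) * A.mulVec y i ≤ A.mulVec x i ∧
    A.mulVec x i ≤ ((1 - δ*γ)*M + δ*γ*(x l / y l)) * A.mulVec y i := by
  set r := x l / y l with hr
  have hyl : 0 < y l := hy l
  have hxl : x l = r * y l := (div_mul_cancel₀ (x l) hyl.ne').symm
  have hrm : m ≤ r := by
    rw [hr, le_div_iff₀ hyl]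
    exact hm l
  have hrM : r ≤ M := by
    rw [hr, div_le_iff₀ hyl]
    exact hM l
  have hAyi : A.mulVec y i ≤ y l / γ := by
    calc A.mulVec y i = ∑ j, A i j * y j := rfl
      _ ≤ ∑ j, A i j * (y l / γ) := by
          refine Finset.sum_le_sum fun j _ => mul_le_mul_of_nonneg_left ?_ (hA i j)
          rw [le_div_iff₀ hγ0, mul_comm]
          exact hG l j
      _ = y l / γ := by rw [← Finset.sum_mul, hrow i, one_mul]
  have hγAy : γ * A.mulVec y i ≤ y l := by
    rw [mul_comm, ← le_div_iff₀ hγ0]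
    exact hAyi
  have hAy_nonneg : 0 ≤ A.mulVec y i := by
    show 0 ≤ ∑ j, A i j * y j
    exact Finset.sum_nonneg fun j _ => mul_nonneg (hA i j) (hy j).le
  have hup : A.mulVec x i ≤ M * A.mulVec y i - A i l * (M * y l - x l) := by
    have h1 : A i l * (M * y l - x l) ≤ ∑ j, A i j * (M * y j - x j) :=
      Finset.single_le_sum (f := fun j => A i j * (M * y j - x j))
        (fun j _ => mul_nonneg (hA i j) (by linarith [hM j])) (Finset.mem_univ l)
    have h2 : ∑ j, A i j * (M * y j - x j) = M * A.mulVec y i - A.mulVec x i := by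
      show _ = M * ∑ j, A i j * y j - ∑ j, A i j * x j
      rw [Finset.mul_sum, ← Finset.sum_sub_distrib]
      exact Finset.sum_congr rfl fun j _ => by ring
    rw [h2] at h1
    linarith
  have hlow : m * A.mulVec y i + A i l * (x l - m * y l) ≤ A.mulVec x i := by
    have h1 : A i l * (x l - m * y l) ≤ ∑ j, A i j * (x j - m * y j) :=
      Finset.single_le_sum (f := fun j => A i j * (x j - m * y j))
        (fun j _ => mul_nonneg (hA i j) (by linarith [hm j])) (Finset.mem_univ l)
    have h2 : ∑ j, A i j * (x j - m * y j) = A.mulVec x i - m * A.mulVec y i := by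
      show _ = (∑ j, A i j * x j) - m * ∑ j, A i j * y j
      rw [Finset.mul_sum, ← Finset.sum_sub_distrib]
      exact Finset.sum_congr rfl fun j _ => by ring
    rw [h2] at h1
    linarith
  have hAil : δ ≤ A i l := hl i
  rw [hxl] at hup hlow
  constructor
  · nlinarith [mul_nonneg (mul_nonneg (sub_nonneg.mpr hAil) (sub_nonneg.mpr hrm)) hyl.le,
      mul_nonneg (mul_nonneg hδ0.le (sub_nonneg.mpr hrm)) (sub_nonneg.mpr hγAy)]
  · nlinarith [mul_nonneg (mul_nonneg (sub_nonneg.mpr hAil) (sub_nonneg.mpr hrM)) hyl.le,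
      mul_nonneg (mul_nonneg hδ0.le (sub_nonneg.mpr hrM)) (sub_nonneg.mpr hγAy)]

/-- the analytic step: `log((1-α)R + α) ≤ (1 - α/Rs) log R` for `1 ≤ R ≤ Rs`. -/
lemma aux_log_step (α R Rs : ℝ) (hα0 : 0 < α) (hα1 : α < 1) (hR : 1 ≤ R) (hRRs : R ≤ Rs) :
    Real.log ((1-α)*R + α) ≤ (1 - α/Rs) * Real.log R := by
  have hR0 : 0 < R := by linarith
  have hRs0 : 0 < Rs := by linarith
  have hQ0 : 0 < (1-α)*R + α := by nlinarith
  have hlogR1 : Real.log R ≤ R - 1 := Real.log_le_sub_one_of_pos hR0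
  have hlogR0 : 0 ≤ Real.log R := Real.log_nonneg hR
  have hsplit : Real.log ((1-α)*R + α) =
      Real.log R + Real.log (((1-α)*R + α) / R) := by
    rw [Real.log_div (ne_of_gt hQ0) (ne_of_gt hR0)]
    ring
  have hq : Real.log (((1-α)*R + α) / R) ≤ ((1-α)*R + α) / R - 1 :=
    Real.log_le_sub_one_of_pos (by positivity)
  have hqval : ((1-α)*R + α) / R - 1 = -(α * (R - 1) / R) := by
    field_simp
    ring
  have hmain : α / Rs * Real.log R ≤ α * (R - 1) / R := by
    have h1 : α / Rs * Real.log R ≤ α / Rs * (R - 1) :=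
      mul_le_mul_of_nonneg_left hlogR1 (by positivity)
    have h2 : α / Rs * (R - 1) ≤ α / R * (R - 1) := by
      apply mul_le_mul_of_nonneg_right _ (by linarith)
      exact div_le_div_of_nonneg_left hα0.le hR0 hRRs
    have h3 : α / R * (R - 1) = α * (R - 1) / R := by ring
    linarith
  rw [hsplit]
  have hq' := hq.trans_eq hqval
  nlinarith

set_option maxHeartbeats 2000000 in
/-- the main induction: iterated contraction of the Hilbert ratio. -/
lemma aux_key_ind {n : ℕ} [Nonempty (Fin n)] (A : Matrix (Fin n) (Fin n) ℝ)
    (hA : ∀ i j, 0 ≤ A i j) (hrow : ∀ i, ∑ j, A i j = 1)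
    (δ γ : ℝ) (hδ0 : 0 < δ) (l : Fin n) (hl : ∀ i, δ ≤ A i l)
    (hγ0 : 0 < γ) (hα1 : δ * γ < 1)
    (x y : Fin n → ℝ) (hx : ∀ i, 0 < x i) (hy : ∀ i, 0 < y i)
    (hGy : ∀ i j, γ * y j ≤ y i)
    (Rs : ℝ) (hRs1 : 1 ≤ Rs)
    (hRs : (⨆ i, x i / y i) ≤ Rs * ⨅ i, x i / y i)
    (hm0 : 0 < ⨅ i, x i / y i) :
    ∀ k : ℕ,
      Real.log ((⨆ i, (A^k).mulVec x i / (A^k).mulVec y i) /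
        (⨅ i, (A^k).mulVec x i / (A^k).mulVec y i)) ≤
      (1 - δ*γ/Rs)^k * Real.log ((⨆ i, x i / y i) / (⨅ i, x i / y i)) := by
  set α := δ * γ with hαdef
  have hα0 : 0 < α := mul_pos hδ0 hγ0
  set c := 1 - α / Rs with hcdef
  have hRs0 : 0 < Rs := by linarith
  clear_value α
  have hc0 : 0 ≤ c := by
    have h1 : α / Rs ≤ α := by
      rw [div_le_iff₀ hRs0]
      nlinarith
    rw [hcdef]
    linarith
  clear_value c
  set m0 := ⨅ i, x i / y i with hm0def
  set M0 := ⨆ i, x i / y i with hM0def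
  have hbase_low : ∀ j, m0 * y j ≤ x j := by
    intro j
    have h := ciInf_le (f := fun i => x i / y i) (Set.finite_range _).bddBelow j
    rw [← hm0def] at h
    calc m0 * y j ≤ (x j / y j) * y j := mul_le_mul_of_nonneg_right h (hy j).le
      _ = x j := div_mul_cancel₀ (x j) (hy j).ne'
  have hbase_up : ∀ j, x j ≤ M0 * y j := by
    intro j
    have h := le_ciSup (f := fun i => x i / y i) (Set.finite_range _).bddAbove j
    rw [← hM0def] at h
    calc x j = (x j / y j) * y j := (div_mul_cancel₀ (x j) (hy j).ne').symm
      _ ≤ M0 * y j := mul_le_mul_of_nonneg_right h (hy j).le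
  have hbase_eq0 : m0 = ⨅ i, (A^0).mulVec x i / (A^0).mulVec y i := by
    rw [hm0def, pow_zero]
    simp only [Matrix.one_mulVec]
  have hbase_eq0' : M0 = ⨆ i, (A^0).mulVec x i / (A^0).mulVec y i := by
    rw [hM0def, pow_zero]
    simp only [Matrix.one_mulVec]
  clear_value m0 M0
  have main : ∀ k : ℕ,
      (∀ i, 0 < (A^k).mulVec x i) ∧ (∀ i, 0 < (A^k).mulVec y i) ∧
      (∀ i j, γ * (A^k).mulVec y j ≤ (A^k).mulVec y i) ∧
      m0 ≤ (⨅ i, (A^k).mulVec x i / (A^k).mulVec y i) ∧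
      (⨆ i, (A^k).mulVec x i / (A^k).mulVec y i) ≤ M0 ∧
      Real.log ((⨆ i, (A^k).mulVec x i / (A^k).mulVec y i) /
        (⨅ i, (A^k).mulVec x i / (A^k).mulVec y i)) ≤ c^k * Real.log (M0 / m0) := by
    intro k
    induction k with
    | zero =>
      have e1 : ∀ z : Fin n → ℝ, (A^0).mulVec z = z := by
        intro z
        rw [pow_zero, Matrix.one_mulVec]
      refine ⟨by rw [e1]; exact hx, by rw [e1]; exact hy, by rw [e1]; exact hGy, ?_, ?_, ?_⟩
      · rw [← hbase_eq0]
      · rw [← hbase_eq0']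
      · rw [← hbase_eq0, ← hbase_eq0', pow_zero, one_mul]
    | succ k ih =>
      obtain ⟨hxk, hyk, hGk, hmk, hMk, hlogk⟩ := ih
      set u := (A^k).mulVec x with hu
      set v := (A^k).mulVec y with hv
      have hpowx : (A^(k+1)).mulVec x = A.mulVec u := by
        rw [hu, pow_succ', Matrix.mulVec_mulVec]
      have hpowy : (A^(k+1)).mulVec y = A.mulVec v := by
        rw [hv, pow_succ', Matrix.mulVec_mulVec]
      clear_value u v
      rw [hpowx, hpowy]
      set mk := ⨅ i, u i / v i with hmkdef
      set Mk := ⨆ i, u i / v i with hMkdef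
      have hmk0 : 0 < mk := lt_of_lt_of_le hm0 hmk
      have hratio_pos : ∀ i, 0 < u i / v i := fun i => div_pos (hxk i) (hyk i)
      have hbdd_above : BddAbove (Set.range fun i => u i / v i) :=
        (Set.finite_range _).bddAbove
      have hbdd_below : BddBelow (Set.range fun i => u i / v i) :=
        (Set.finite_range _).bddBelow
      have hmkMk : mk ≤ Mk :=
        le_trans (ciInf_le (f := fun i => u i / v i) hbdd_below l)
          (le_ciSup (f := fun i => u i / v i) hbdd_above l)
      have hMk0 : 0 < Mk := lt_of_lt_of_le hmk0 hmkMk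
      have hmj : ∀ j, mk * v j ≤ u j := by
        intro j
        have h := ciInf_le (f := fun i => u i / v i) hbdd_below j
        calc mk * v j ≤ (u j / v j) * v j :=
              mul_le_mul_of_nonneg_right h (hyk j).le
          _ = u j := div_mul_cancel₀ (u j) (hyk j).ne'
      have hMj : ∀ j, u j ≤ Mk * v j := by
        intro j
        have h := le_ciSup (f := fun i => u i / v i) hbdd_above j
        calc u j = (u j / v j) * v j := (div_mul_cancel₀ (u j) (hyk j).ne').symm
          _ ≤ Mk * v j := mul_le_mul_of_nonneg_right h (hyk j).le
      set r := u l / v l with hrdef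
      have hr0 : 0 < r := hratio_pos l
      have hrmk : mk ≤ r := ciInf_le (f := fun i => u i / v i) hbdd_below l
      have hrMk : r ≤ Mk := le_ciSup (f := fun i => u i / v i) hbdd_above l
      have hcore : ∀ i, ((1 - α)*mk + α*r) * A.mulVec v i ≤ A.mulVec u i ∧
          A.mulVec u i ≤ ((1 - α)*Mk + α*r) * A.mulVec v i := by
        rw [hαdef, hrdef]
        exact aux_step_core A hA hrow δ γ hδ0 l hl hγ0 u v hyk hGk mk Mk hmj hMj
      clear_value mk Mk r
      set L := (1 - α)*mk + α*r with hLdef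
      set U := (1 - α)*Mk + α*r with hUdef
      clear_value L U
      have hα1' : α < 1 := hα1
      have hL0 : 0 < L := by
        have h1 : 0 ≤ (1-α)*mk := mul_nonneg (by linarith) hmk0.le
        have h2 : 0 < α*r := mul_pos hα0 hr0
        rw [hLdef]
        linarith
      have hAvpos : ∀ i, 0 < A.mulVec v i := aux_step_pos A hA δ hδ0 l hl v hyk
      have hAupos : ∀ i, 0 < A.mulVec u i := aux_step_pos A hA δ hδ0 l hl u hxk
      have hGnew : ∀ i j, γ * A.mulVec v j ≤ A.mulVec v i :=
        aux_step_good A hA hrow γ hγ0.le v hGk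
      set mk1 := ⨅ i, A.mulVec u i / A.mulVec v i with hmk1def
      set Mk1 := ⨆ i, A.mulVec u i / A.mulVec v i with hMk1def
      have hnewlow : L ≤ mk1 := by
        rw [hmk1def]
        apply le_ciInf
        intro i
        rw [le_div_iff₀ (hAvpos i)]
        exact (hcore i).1
      have hnewup : Mk1 ≤ U := by
        rw [hMk1def]
        apply ciSup_le
        intro i
        rw [div_le_iff₀ (hAvpos i)]
        exact (hcore i).2
      have hmk1Mk1 : mk1 ≤ Mk1 :=
        le_trans (ciInf_le (f := fun i => A.mulVec u i / A.mulVec v i)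
            (Set.finite_range _).bddBelow l)
          (le_ciSup (f := fun i => A.mulVec u i / A.mulVec v i)
            (Set.finite_range _).bddAbove l)
      clear_value mk1 Mk1
      have hmkL : mk ≤ L := by
        rw [hLdef]
        nlinarith [mul_nonneg hα0.le (sub_nonneg.mpr hrmk)]
      have hUMk : U ≤ Mk := by
        rw [hUdef]
        nlinarith [mul_nonneg hα0.le (sub_nonneg.mpr hrMk)]
      have hmk1mono : mk ≤ mk1 := hmkL.trans hnewlow
      have hMk1mono : Mk1 ≤ Mk := hnewup.trans hUMk
      have hmk1pos : 0 < mk1 := lt_of_lt_of_le hL0 hnewlow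
      have hMk1pos : 0 < Mk1 := lt_of_lt_of_le hmk1pos hmk1Mk1
      refine ⟨hAupos, hAvpos, hGnew, hmk.trans hmk1mono, hMk1mono.trans hMk, ?_⟩
      have hRk1 : 1 ≤ Mk / mk := (one_le_div hmk0).mpr hmkMk
      have hRkRs : Mk / mk ≤ Rs := by
        rw [div_le_iff₀ hmk0]
        calc Mk ≤ M0 := hMk
          _ ≤ Rs * m0 := hRs
          _ ≤ Rs * mk := mul_le_mul_of_nonneg_left hmk (by linarith)
      have hLU : L ≤ U := by
        rw [hLdef, hUdef]
        nlinarith [mul_nonneg (sub_nonneg.mpr hα1'.le) (sub_nonneg.mpr hmkMk)]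
      have hstep1 : Mk1 / mk1 ≤ U / L := div_le_div₀ (by linarith) hnewup hL0 hnewlow
      have hstep2 : U / L ≤ ((1-α)*Mk + α*mk) / mk := by
        rw [div_le_div_iff₀ hL0 hmk0, hLdef, hUdef]
        nlinarith [mul_nonneg (mul_nonneg (mul_nonneg (sub_nonneg.mpr hα1'.le) hα0.le)
          (sub_nonneg.mpr hmkMk)) (sub_nonneg.mpr hrmk)]
      have hstep3 : ((1-α)*Mk + α*mk) / mk = (1-α)*(Mk/mk) + α := by
        field_simp
      have hstep : Mk1 / mk1 ≤ (1-α)*(Mk/mk) + α := by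
        rw [← hstep3]
        exact hstep1.trans hstep2
      have hlog1 : Real.log (Mk1 / mk1) ≤ Real.log ((1-α)*(Mk/mk) + α) :=
        Real.log_le_log (div_pos hMk1pos hmk1pos) hstep
      have hlog2 : Real.log ((1-α)*(Mk/mk) + α) ≤ c * Real.log (Mk/mk) := by
        rw [hcdef]
        exact aux_log_step α (Mk/mk) Rs hα0 hα1' hRk1 hRkRs
      calc Real.log (Mk1 / mk1) ≤ c * Real.log (Mk/mk) := hlog1.trans hlog2
        _ ≤ c * (c^k * Real.log (M0/m0)) := mul_le_mul_of_nonneg_left hlogk hc0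
        _ = c^(k+1) * Real.log (M0/m0) := by ring
  intro k
  exact (main k).2.2.2.2.2

/-- there exists `c ∈ (0,1)` with
`diam(Aᵐ·K(ε)) ≤ cᵐ·diam(K(ε))` for every positive integer `m`. -/
theorem stmt11 {n : ℕ} (hn : 2 ≤ n) (A : Matrix (Fin n) (Fin n) ℝ)
    (hA : ∀ i j, 0 ≤ A i j) (hrow : ∀ i, ∑ j, A i j = 1)
    (δ : ℝ) (hδ : δ ∈ Set.Ioo (0 : ℝ) 1) (l : Fin n) (hl : ∀ i, δ < A i l)
    (ε : ℝ) (hε0 : 0 < ε) (hε : ε < 1 / Real.sqrt n) :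
    ∃ c ∈ Set.Ioo (0 : ℝ) 1, ∀ m : ℕ, 0 < m →
      hilbertDiam ((fun x => (A ^ m).mulVec x) '' Kcone n ε) ≤
        c ^ m * hilbertDiam (Kcone n ε) := by
  haveI : Nonempty (Fin n) := ⟨⟨0, by omega⟩⟩
  obtain ⟨hδ0, hδ1⟩ := hδ
  set γ := 1 / Real.sqrt n - ε with hγdef
  have hsn : (0:ℝ) < Real.sqrt n := by
    apply Real.sqrt_pos.mpr
    have : (2:ℝ) ≤ n := by exact_mod_cast hn
    linarith
  have hγ0 : 0 < γ := by simp only [hγdef]; linarith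
  have hsn1 : 1 < Real.sqrt n := by
    have h2 : Real.sqrt 2 ≤ Real.sqrt n := by
      apply Real.sqrt_le_sqrt
      exact_mod_cast hn
    have h1 : (1:ℝ) < Real.sqrt 2 := by
      rw [show (1:ℝ) = Real.sqrt 1 from (Real.sqrt_one).symm]
      exact Real.sqrt_lt_sqrt (by norm_num) (by norm_num)
    linarith
  have hγ1 : γ < 1 := by
    have h : 1 / Real.sqrt n < 1 := by
      rw [div_lt_one hsn]
      exact hsn1
    simp only [hγdef]
    linarith
  have hα1 : δ * γ < 1 := by nlinarith
  -- cone facts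
  have hcone : ∀ x ∈ Kcone n ε, x ≠ 0 →
      (∀ i, 0 < x i) ∧ (∀ i, γ * eunorm x ≤ x i) ∧ (∀ i, x i ≤ eunorm x) ∧ 0 < eunorm x := by
    intro x hxK hx0
    have hN : 0 < eunorm x := aux_eunorm_pos x hx0
    have hlow : ∀ i, γ * eunorm x ≤ x i := fun i => hxK i
    have hpos : ∀ i, 0 < x i := fun i => lt_of_lt_of_le (by positivity) (hlow i)
    exact ⟨hpos, hlow, aux_coord_le_eunorm x (fun i => (hpos i).le), hN⟩
  set Rs := 1 / γ^2 with hRsdef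
  have hRs1 : 1 ≤ Rs := by
    rw [hRsdef, le_div_iff₀ (by positivity)]
    nlinarith
  -- ratio bounds for two cone elements
  have hkey : ∀ x ∈ Kcone n ε, ∀ y ∈ Kcone n ε, x ≠ 0 → y ≠ 0 →
      0 < (⨅ i, x i / y i) ∧ (⨆ i, x i / y i) ≤ Rs * ⨅ i, x i / y i := by
    intro x hxK y hyK hx0 hy0
    obtain ⟨hxp, hxl, hxu, hxN⟩ := hcone x hxK hx0
    obtain ⟨hyp, hyl, hyu, hyN⟩ := hcone y hyK hy0
    have h1 : γ * eunorm x / eunorm y ≤ (⨅ i, x i / y i) := by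
      apply le_ciInf
      intro i
      exact div_le_div₀ (hxp i).le (hxl i) (hyp i) (hyu i)
    have h2 : (⨆ i, x i / y i) ≤ eunorm x / (γ * eunorm y) := by
      apply ciSup_le
      intro i
      exact div_le_div₀ (by positivity) (hxu i) (by positivity) (hyl i)
    have hm0pos : 0 < (⨅ i, x i / y i) := lt_of_lt_of_le (by positivity) h1
    refine ⟨hm0pos, ?_⟩
    have heq : eunorm x / (γ * eunorm y) = Rs * (γ * eunorm x / eunorm y) := by
      rw [hRsdef]
      field_simp
    calc (⨆ i, x i / y i) ≤ eunorm x / (γ * eunorm y) := h2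
      _ = Rs * (γ * eunorm x / eunorm y) := heq
      _ ≤ Rs * ⨅ i, x i / y i := mul_le_mul_of_nonneg_left h1 (by positivity)
  -- hilbertDist bounded on the cone
  have hdistbdd : ∀ x ∈ Kcone n ε, ∀ y ∈ Kcone n ε, x ≠ 0 → y ≠ 0 →
      hilbertDist x y ≤ Real.log Rs := by
    intro x hxK y hyK hx0 hy0
    obtain ⟨hm0pos, hRsb⟩ := hkey x hxK y hyK hx0 hy0
    have hMm : (⨅ i, x i / y i) ≤ (⨆ i, x i / y i) :=
      le_trans (ciInf_le (f := fun i => x i / y i) (Set.finite_range _).bddBelow l)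
        (le_ciSup (f := fun i => x i / y i) (Set.finite_range _).bddAbove l)
    have hdivpos : 0 < (⨆ i, x i / y i) / (⨅ i, x i / y i) :=
      div_pos (lt_of_lt_of_le hm0pos hMm) hm0pos
    have hle : (⨆ i, x i / y i) / (⨅ i, x i / y i) ≤ Rs := by
      rw [div_le_iff₀ hm0pos]
      exact hRsb
    exact Real.log_le_log hdivpos hle
  have hbddS : BddAbove {d : ℝ | ∃ x ∈ Kcone n ε, ∃ y ∈ Kcone n ε,
      x ≠ 0 ∧ y ≠ 0 ∧ d = hilbertDist x y} := by
    refine ⟨Real.log Rs, ?_⟩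
    rintro d ⟨x, hxK, y, hyK, hx0, hy0, rfl⟩
    exact hdistbdd x hxK y hyK hx0 hy0
  -- the all-ones vector
  have honesK : (fun _ => (1:ℝ)) ∈ Kcone n ε := by
    intro i
    have heu : eunorm (fun _ : Fin n => (1:ℝ)) = Real.sqrt n := by
      simp [eunorm]
    show (1 / Real.sqrt n - ε) * eunorm (fun _ : Fin n => (1:ℝ)) ≤ 1
    rw [heu]
    have hc : (1 / Real.sqrt n) * Real.sqrt n = 1 := one_div_mul_cancel hsn.ne'
    nlinarith [mul_pos hε0 hsn]
  have hones0 : (fun _ : Fin n => (1:ℝ)) ≠ 0 := by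
    intro h
    have := congrFun h ⟨0, by omega⟩
    norm_num at this
  have hzeromem : (0:ℝ) ∈ {d : ℝ | ∃ x ∈ Kcone n ε, ∃ y ∈ Kcone n ε,
      x ≠ 0 ∧ y ≠ 0 ∧ d = hilbertDist x y} := by
    refine ⟨_, honesK, _, honesK, hones0, hones0, ?_⟩
    simp [hilbertDist, ciSup_const, ciInf_const]
  have hD0 : 0 ≤ hilbertDiam (Kcone n ε) := le_csSup hbddS hzeromem
  -- the constant
  have hgd3 : 0 < δ * γ^3 := by positivity
  have hgd3' : δ * γ^3 < 1 := by nlinarith [pow_pos hγ0 3, sq_nonneg γ, sq_nonneg (γ-1)]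
  refine ⟨1 - δ * γ^3, ⟨by linarith, by linarith⟩, ?_⟩
  intro m hm
  have hceq : 1 - δ*γ/Rs = 1 - δ*γ^3 := by
    rw [hRsdef]
    field_simp
  have hcpow : (0:ℝ) ≤ (1 - δ*γ^3)^m := by
    apply pow_nonneg
    linarith
  simp only [hilbertDiam]
  apply Real.sSup_le
  · rintro d ⟨u, ⟨x, hxK, rfl⟩, v, ⟨y, hyK, rfl⟩, hu0, hv0, rfl⟩
    have hx0 : x ≠ 0 := by
      rintro rfl
      exact hu0 (Matrix.mulVec_zero _)
    have hy0 : y ≠ 0 := by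
      rintro rfl
      exact hv0 (Matrix.mulVec_zero _)
    obtain ⟨hxp, hxl, hxu, hxN⟩ := hcone x hxK hx0
    obtain ⟨hyp, hyl, hyu, hyN⟩ := hcone y hyK hy0
    have hGy : ∀ i j, γ * y j ≤ y i := fun i j =>
      le_trans (mul_le_mul_of_nonneg_left (hyu j) hγ0.le) (hyl i)
    obtain ⟨hm0p, hRsb⟩ := hkey x hxK y hyK hx0 hy0
    have hkd := aux_key_ind A hA hrow δ γ hδ0 l (fun i => (hl i).le) hγ0 hα1
      x y hxp hyp hGy Rs hRs1 hRsb hm0p m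
    rw [hceq] at hkd
    have hdle : hilbertDist x y ≤ hilbertDiam (Kcone n ε) :=
      le_csSup hbddS ⟨x, hxK, y, hyK, hx0, hy0, rfl⟩
    calc hilbertDist ((A^m).mulVec x) ((A^m).mulVec y)
        = Real.log ((⨆ i, (A^m).mulVec x i / (A^m).mulVec y i) /
            (⨅ i, (A^m).mulVec x i / (A^m).mulVec y i)) := rfl
      _ ≤ (1 - δ*γ^3)^m * Real.log ((⨆ i, x i / y i) / (⨅ i, x i / y i)) := hkd
      _ = (1 - δ*γ^3)^m * hilbertDist x y := rfl
      _ ≤ (1 - δ*γ^3)^m * hilbertDiam (Kcone n ε) :=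
          mul_le_mul_of_nonneg_left hdle hcpow
  · exact mul_nonneg hcpow hD0
end

section
/- Let n ≥ 2, let A be an n×n matrix with all entries nonnegative and with A𝟙 = 𝟙, and suppose there exist δ ∈ (0,1) and an index ℓ such that A_{iℓ} > δ for every i. Let 0 < ε < 1/√n, set C = (1 − δ)/(1 − √n·ε·δ), and let e ∈ ℝⁿ satisfy 1/√n − ε ≤ e_i ≤ 1/√n for all i with e ≠ 0. Then (Ae)_i / |Ae| ≥ 1/√n − C·ε for every index i, where |·| is the Euclidean norm. -/
set_option maxHeartbeats 1000000


/-- with `C = (1 − δ)/(1 − √n·ε·δ)` and `e` satisfying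
`1/√n − ε ≤ e_i ≤ 1/√n` with `e ≠ 0`, one has `(Ae)_i/|Ae| ≥ 1/√n − C·ε` for every `i`. -/
theorem stmt12 {n : ℕ} (hn : 2 ≤ n) (A : Matrix (Fin n) (Fin n) ℝ)
    (hA : ∀ i j, 0 ≤ A i j) (hrow : ∀ i, ∑ j, A i j = 1)
    (δ : ℝ) (hδ : δ ∈ Set.Ioo (0 : ℝ) 1) (l : Fin n) (hl : ∀ i, δ < A i l)
    (ε : ℝ) (hε0 : 0 < ε) (hε : ε < 1 / Real.sqrt n)
    (e : Fin n → ℝ) (he : ∀ i, 1 / Real.sqrt n - ε ≤ e i ∧ e i ≤ 1 / Real.sqrt n)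
    (he0 : e ≠ 0) :
    ∀ i, 1 / Real.sqrt n - (1 - δ) / (1 - Real.sqrt n * ε * δ) * ε ≤
      A.mulVec e i / eunorm (A.mulVec e) := by
  intro i
  have hδ0 : (0:ℝ) < δ := hδ.1
  have hδ1 : δ < 1 := hδ.2
  have hn0 : (0:ℝ) < n := by positivity
  obtain ⟨r, hrdef⟩ : ∃ r, r = Real.sqrt (n:ℝ) := ⟨_, rfl⟩
  have hr : 0 < r := hrdef ▸ Real.sqrt_pos.mpr hn0
  rw [← hrdef] at hε he ⊢
  obtain ⟨s, hsdef⟩ : ∃ s, s = 1 / r := ⟨_, rfl⟩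
  rw [← hsdef] at hε he ⊢
  have hs0 : 0 < s := by rw [hsdef]; positivity
  have hrs : r * s = 1 := by rw [hsdef]; field_simp
  have hsε : ε < s := hε
  obtain ⟨u, hudef⟩ : ∃ u, u = s - e l := ⟨_, rfl⟩
  have hu0 : 0 ≤ u := by have := (he l).2; linarith
  have huε : u ≤ ε := by have := (he l).1; linarith
  have hrε1 : r * ε < 1 := by
    have h := (mul_lt_mul_iff_right₀ hr).mpr hsε
    nlinarith
  have hden : 0 < 1 - r * ε * δ := by nlinarith
  obtain ⟨C, hCdef⟩ : ∃ C, C = (1 - δ) / (1 - r * ε * δ) := ⟨_, rfl⟩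
  rw [← hCdef]
  have hC0 : 0 ≤ C := hCdef ▸ div_nonneg (by linarith) hden.le
  have hCkey : C * (1 - r * ε * δ) = 1 - δ := by
    rw [hCdef]; exact div_mul_cancel₀ _ hden.ne'
  have he_lb : ∀ j, s - ε ≤ e j := fun j => (he j).1
  have he_ub : ∀ j, e j ≤ s := fun j => (he j).2
  have hsplit : ∀ k, A.mulVec e k = A k l * e l + ∑ j ∈ Finset.univ.erase l, A k j * e j := by
    intro k
    rw [Matrix.mulVec, dotProduct]
    exact (Finset.add_sum_erase _ _ (Finset.mem_univ l)).symm
  have hsumerase : ∀ k, ∑ j ∈ Finset.univ.erase l, A k j = 1 - A k l := by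
    intro k
    have h := hrow k
    rw [← Finset.add_sum_erase _ _ (Finset.mem_univ l)] at h
    linarith
  have hlow : ∀ k, s - ε + A k l * (ε - u) ≤ A.mulVec e k := by
    intro k
    rw [hsplit k]
    have h1 : (s - ε) * ∑ j ∈ Finset.univ.erase l, A k j ≤
        ∑ j ∈ Finset.univ.erase l, A k j * e j := by
      rw [Finset.mul_sum]
      refine Finset.sum_le_sum fun j _ => ?_
      rw [mul_comm]
      exact mul_le_mul_of_nonneg_left (he_lb j) (hA k j)
    rw [hsumerase k] at h1
    have hel : e l = s - u := by linarith
    rw [hel]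
    nlinarith [h1]
  have hup : ∀ k, A.mulVec e k ≤ s - δ * u := by
    intro k
    rw [hsplit k]
    have h1 : ∑ j ∈ Finset.univ.erase l, A k j * e j ≤
        s * ∑ j ∈ Finset.univ.erase l, A k j := by
      rw [Finset.mul_sum]
      refine Finset.sum_le_sum fun j _ => ?_
      rw [mul_comm s]
      exact mul_le_mul_of_nonneg_left (he_ub j) (hA k j)
    rw [hsumerase k] at h1
    have hel : e l = s - u := by linarith
    rw [hel]
    nlinarith [h1, hl k, hu0]
  have hupos : ∀ k, 0 < A.mulVec e k := by
    intro k
    refine lt_of_lt_of_le ?_ (hlow k)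
    have h2 : 0 ≤ A k l * (ε - u) := mul_nonneg (hA k l) (by linarith)
    linarith
  have hDpos : 0 < s - δ * u := lt_of_lt_of_le (hupos l) (hup l)
  have hnorm_ub : eunorm (A.mulVec e) ≤ r * (s - δ * u) := by
    unfold eunorm
    have h1 : ∑ k, (A.mulVec e k) ^ 2 ≤ ∑ _k : Fin n, (s - δ * u) ^ 2 :=
      Finset.sum_le_sum fun k _ => by nlinarith [hup k, hupos k]
    have h2 : ∑ _k : Fin n, (s - δ * u) ^ 2 = (n : ℝ) * (s - δ * u) ^ 2 := by
      rw [Finset.sum_const, Finset.card_univ, Fintype.card_fin, nsmul_eq_mul]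
    calc Real.sqrt (∑ k, (A.mulVec e k) ^ 2)
        ≤ Real.sqrt ((n : ℝ) * (s - δ * u) ^ 2) := Real.sqrt_le_sqrt (by rw [h2] at h1; exact h1)
      _ = r * (s - δ * u) := by
          rw [Real.sqrt_mul hn0.le, Real.sqrt_sq hDpos.le, hrdef]
  have hnorm_pos : 0 < eunorm (A.mulVec e) := by
    unfold eunorm
    apply Real.sqrt_pos.mpr
    haveI : Nonempty (Fin n) := ⟨⟨0, by omega⟩⟩
    exact Finset.sum_pos (fun k _ => pow_pos (hupos k) 2) Finset.univ_nonempty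
  rw [le_div_iff₀ hnorm_pos]
  have main : (s - C * ε) * eunorm (A.mulVec e) ≤ A.mulVec e i := by
    rcases le_or_gt (s - C * ε) 0 with hsgn | hsgn
    · have := mul_nonpos_of_nonpos_of_nonneg hsgn hnorm_pos.le
      linarith [hupos i]
    · have h2 : (s - C * ε) * eunorm (A.mulVec e) ≤ (s - C * ε) * (r * (s - δ * u)) :=
        mul_le_mul_of_nonneg_left hnorm_ub hsgn.le
      have h3 : ε * (1 - δ) ≤ C * ε * (1 - r * δ * u) := by
        nlinarith [hCkey, mul_nonneg (mul_nonneg (mul_nonneg (mul_nonneg hC0 hε0.le) hr.le) hδ0.le) (sub_nonneg.mpr huε)]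
      have h4 : (s - C * ε) * (r * (s - δ * u)) ≤ s - ε + δ * (ε - u) := by
        have hexp : (s - C * ε) * (r * (s - δ * u))
            = s - δ * u - C * ε * (1 - r * δ * u) := by
          linear_combination (s - δ * u - C * ε) * hrs
        rw [hexp]
        linarith
      have h5 : s - ε + δ * (ε - u) ≤ A.mulVec e i := by
        refine le_trans ?_ (hlow i)
        nlinarith [hl i, huε]
      linarith
  exact main
end

section
/- (Moreau's theorem, linear time-varying consensus.) Let n ≥ 1 and let A : [0,∞) → ℝ^{n×n} be continuous and uniformly bounded, with A(t)_{ij} ≥ 0 for all i ≠ j and Σ_j A(t)_{ij} = 0 for every row i and every t ≥ 0 (Metzler with zero row sums). Suppose there exist an index ℓ, a threshold δ > 0 and an interval length T > 0 such that ∫_t^{t+T} A(s)_{iℓ} ds ≥ δ for every i ≠ ℓ and every t ≥ 0. Let x : [0,∞) → ℝⁿ be differentiable with x′(t) = A(t)·x(t) for all t ≥ 0. Then there exist constants k, λ > 0 such that max_{i,j} |x_i(t) − x_j(t)| ≤ k·e^{−λt}·max_{i,j} |x_i(0) − x_j(0)| for all t ≥ 0. -/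
/-!
The maximum of the coordinates of a solution is nonincreasing: at a maximizing coordinate `i`,
`(A x)ᵢ = ∑ⱼ Aᵢⱼ (xⱼ - xᵢ) ≤ 0` because `A` is Metzler with zero row sums. Fix `t`, let `c` be the
maximum at time `t` and `zᵢ = c - xᵢ ≥ 0` the gaps after `t`. They satisfy `z' = A z`, so with
`K` bounding `-Aᵢᵢ`, `e^{K s} zᵢ(s)` is nondecreasing and `(e^{K s} zᵢ)' ≥ e^{K s} Aᵢₗ zₗ`.
Hence `zₗ` decays at most like `e^{-K s}`, and integrating the second inequality over
`[t, t + T]` against the connectivity bound `∫ Aᵢₗ ≥ δ` shows that every gap at time `t + T` is at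
least `γ zₗ(t)` with `γ = min δ 1 · e^{-2KT}`. The same holds for `-x`, and adding the two bounds,
the spread `max x - min x` contracts by the factor `1 - γ` over every window of length `T`; being
also nonincreasing, it decays exponentially.
-/

open Finset Set Filter
open scoped Topology

structure Matrix.IsMetzlerZeroRowSum {ι : Type*} [Fintype ι] (M : Matrix ι ι ℝ) : Prop where
  nonneg_of_ne : ∀ i j, i ≠ j → 0 ≤ M i j
  sum_row : ∀ i, ∑ j, M i j = 0

namespace Matrix.IsMetzlerZeroRowSum

variable {ι : Type*} [Fintype ι] {M : Matrix ι ι ℝ}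

theorem mulVec_apply_eq_sum_mul_sub (hM : M.IsMetzlerZeroRowSum) (v : ι → ℝ) (c : ℝ) (i : ι) :
    (M *ᵥ v) i = ∑ j, M i j * (v j - c) := by
  simp only [mul_sub, sum_sub_distrib, ← sum_mul, hM.sum_row, zero_mul, sub_zero]
  rfl

theorem mulVec_apply_nonpos_of_forall_le (hM : M.IsMetzlerZeroRowSum) {v : ι → ℝ} {i : ι}
    (hi : ∀ j, v j ≤ v i) : (M *ᵥ v) i ≤ 0 := by
  rw [hM.mulVec_apply_eq_sum_mul_sub v (v i)]
  refine sum_nonpos fun j _ => ?_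
  rcases eq_or_ne i j with rfl | hij
  · simp
  · exact mul_nonpos_of_nonneg_of_nonpos (hM.nonneg_of_ne i j hij) (sub_nonpos.2 (hi j))

theorem mul_sub_sub_mulVec_apply [DecidableEq ι] (hM : M.IsMetzlerZeroRowSum) (v : ι → ℝ)
    (K c : ℝ) (i : ι) :
    K * (c - v i) - (M *ᵥ v) i
      = (K + M i i) * (c - v i) + ∑ j ∈ univ.erase i, M i j * (c - v j) := by
  rw [hM.mulVec_apply_eq_sum_mul_sub v c, ← add_sum_erase _ _ (mem_univ i)]
  simp only [mul_sub, sum_sub_distrib]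
  ring

variable {v : ι → ℝ} {K c : ℝ}

theorem mul_sub_nonneg_of_mem_erase [DecidableEq ι] (hM : M.IsMetzlerZeroRowSum)
    (hv : ∀ j, v j ≤ c) {i j : ι} (hj : j ∈ univ.erase i) : 0 ≤ M i j * (c - v j) :=
  mul_nonneg (hM.nonneg_of_ne i j (ne_of_mem_erase hj).symm) (sub_nonneg.2 (hv j))

theorem mulVec_apply_le_mul_sub (hM : M.IsMetzlerZeroRowSum) (hv : ∀ j, v j ≤ c) {i : ι}
    (hK : -M i i ≤ K) : (M *ᵥ v) i ≤ K * (c - v i) := by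
  classical
  have := hM.mul_sub_sub_mulVec_apply v K c i
  nlinarith [sum_nonneg fun _ => hM.mul_sub_nonneg_of_mem_erase hv (i := i),
    sub_nonneg.2 (hv i)]

theorem mul_sub_le_mul_sub_sub_mulVec_apply (hM : M.IsMetzlerZeroRowSum) (hv : ∀ j, v j ≤ c)
    {i k : ι} (hK : -M i i ≤ K) (hki : k ≠ i) :
    M i k * (c - v k) ≤ K * (c - v i) - (M *ᵥ v) i := by
  classical
  rw [hM.mul_sub_sub_mulVec_apply v K c i]
  have hk : M i k * (c - v k) ≤ ∑ j ∈ univ.erase i, M i j * (c - v j) :=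
    single_le_sum (f := fun j => M i j * (c - v j)) (fun _ => hM.mul_sub_nonneg_of_mem_erase hv)
      (mem_erase.2 ⟨hki, mem_univ k⟩)
  nlinarith [sub_nonneg.2 (hv i)]

end Matrix.IsMetzlerZeroRowSum

theorem antitoneOn_sup'_of_hasDerivAt {ι : Type*} [Fintype ι] [Nonempty ι] {f f' : ℝ → ι → ℝ}
    {a : ℝ} (hf : ∀ t, a ≤ t → HasDerivAt f (f' t) t)
    (hmax : ∀ t, a ≤ t → ∀ i, (∀ j, f t j ≤ f t i) → f' t i ≤ 0) :
    AntitoneOn (fun t => univ.sup' univ_nonempty (f t)) (Ici a) := by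
  set g := fun t => univ.sup' univ_nonempty (f t)
  have hcont : ∀ t, a ≤ t → ContinuousAt g t := fun t ht =>
    ContinuousAt.finset_sup'_apply _ fun i _ => (hasDerivAt_pi.1 (hf t ht) i).continuousAt
  intro s hs b _ hsb
  refine image_le_of_liminf_slope_right_le_deriv_boundary (B := fun _ => g s) (B' := 0)
    (fun u hu => (hcont u (hs.trans hu.1)).continuousWithinAt) le_rfl continuousOn_const
    (fun _ _ => hasDerivWithinAt_const _ _ _) ?_ ⟨hsb, le_rfl⟩
  intro u hu r hr
  have hua : a ≤ u := le_trans hs hu.1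
  have hbelow : ∀ i, ∀ᶠ z in 𝓝[>] u, f z i < g u + r * (z - u) := by
    intro i
    rcases (le_sup' (f u) (mem_univ i)).lt_or_eq with hlt | heq
    · have hc : ContinuousAt (fun z => f z i - (g u + r * (z - u))) u :=
        (hasDerivAt_pi.1 (hf u hua) i).continuousAt.sub (by fun_prop)
      have h0 : f u i - (g u + r * (u - u)) < 0 := by
        rwa [sub_self, mul_zero, add_zero, sub_neg]
      have := hc.eventually (gt_mem_nhds h0)
      exact nhdsWithin_le_nhds (this.mono fun z hz => by linarith)
    · have hmaxi : ∀ j, f u j ≤ f u i := fun j => heq ▸ le_sup' (f u) (mem_univ j)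
      have hslope := ((hasDerivAt_pi.1 (hf u hua) i).hasDerivWithinAt (s := Ioi u)).limsup_slope_le'
        (lt_irrefl u) ((hmax u hua i hmaxi).trans_lt hr)
      filter_upwards [hslope, self_mem_nhdsWithin] with z hz hzu
      rw [slope_def_field, div_lt_iff₀ (sub_pos.2 hzu)] at hz
      linarith
  refine (((eventually_all.2 hbelow).and self_mem_nhdsWithin).mono fun z hz => ?_).frequently
  rw [slope_def_field, div_lt_iff₀ (sub_pos.2 hz.2)]
  have : g z < g u + r * (z - u) := (sup'_lt_iff _).2 fun i _ => hz.1 i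
  linarith

section Spread

variable {ι : Type*} [Fintype ι] [Nonempty ι]

/-- `max v - min v`, with the minimum written as `-max (-v)`: bounds on the maximum of a solution
then transfer to its minimum by negating the solution. -/
def spread (v : ι → ℝ) : ℝ := univ.sup' univ_nonempty v + univ.sup' univ_nonempty (-v)

theorem abs_sub_le_spread (v : ι → ℝ) (i j : ι) : |v i - v j| ≤ spread v := by
  have hi := le_sup' v (mem_univ i)
  have hj := le_sup' v (mem_univ j)
  have hi' := le_sup' (-v) (mem_univ i)
  have hj' := le_sup' (-v) (mem_univ j)
  simp only [Pi.neg_apply] at hi' hj'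
  rw [spread, abs_sub_le_iff]
  constructor <;> linarith

theorem spread_nonneg (v : ι → ℝ) : 0 ≤ spread v := by
  obtain ⟨i⟩ := ‹Nonempty ι›
  simpa using abs_sub_le_spread v i i

theorem spread_le_iSup_abs_sub (v : ι → ℝ) : spread v ≤ ⨆ p : ι × ι, |v p.1 - v p.2| := by
  obtain ⟨i, -, hi⟩ := exists_mem_eq_sup' univ_nonempty v
  obtain ⟨j, -, hj⟩ := exists_mem_eq_sup' univ_nonempty (-v)
  calc spread v = v i - v j := by rw [spread, hi, hj, Pi.neg_apply, sub_eq_add_neg]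
    _ ≤ |v i - v j| := le_abs_self _
    _ ≤ ⨆ p : ι × ι, |v p.1 - v p.2| :=
        le_ciSup (f := fun p : ι × ι => |v p.1 - v p.2|) (Set.finite_range _).bddAbove (i, j)

end Spread

theorem exists_exp_decay_of_antitoneOn {V : ℝ → ℝ} {T q : ℝ} (hT : 0 < T) (hq : q < 1)
    (hV : AntitoneOn V (Ici 0)) (hV0 : ∀ t, 0 ≤ t → 0 ≤ V t)
    (hVT : ∀ t, 0 ≤ t → V (t + T) ≤ q * V t) :
    ∃ k lam : ℝ, 0 < k ∧ 0 < lam ∧ ∀ t, 0 ≤ t → V t ≤ k * Real.exp (-lam * t) * V 0 := by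
  set p := max q (1 / 2)
  have hp0 : 0 < p := lt_max_of_lt_right (by norm_num)
  have hp1 : p < 1 := max_lt hq (by norm_num)
  have hlog : Real.log p < 0 := Real.log_neg hp0 hp1
  have hiter : ∀ m : ℕ, V (m * T) ≤ p ^ m * V 0 := by
    intro m
    induction m with
    | zero => simp
    | succ m ih =>
      have hmT : (0 : ℝ) ≤ m * T := by positivity
      calc V ((m + 1 : ℕ) * T) = V (m * T + T) := by push_cast; ring_nf
        _ ≤ q * V (m * T) := hVT _ hmT
        _ ≤ p * (p ^ m * V 0) :=
            mul_le_mul (le_max_left _ _) ih (hV0 _ hmT) hp0.le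
        _ = p ^ (m + 1) * V 0 := by ring
  refine ⟨p⁻¹, -Real.log p / T, inv_pos.2 hp0, div_pos (neg_pos.2 hlog) hT, fun t ht => ?_⟩
  set m := ⌊t / T⌋₊
  have hmT : (m : ℝ) * T ≤ t := (le_div_iff₀ hT).1 (Nat.floor_le (div_nonneg ht hT.le))
  have hm : t / T < m + 1 := Nat.lt_floor_add_one _
  have hpow : p ^ m ≤ p⁻¹ * Real.exp (-(-Real.log p / T) * t) := by
    rw [← Real.exp_log hp0, ← Real.exp_nat_mul, ← Real.exp_neg, ← Real.exp_add,
      Real.exp_log hp0]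
    refine Real.exp_le_exp.2 ?_
    have : -Real.log p + -(-Real.log p / T) * t = (t / T - 1) * Real.log p := by
      field_simp; ring
    rw [this]
    nlinarith
  calc V t ≤ V (m * T) := hV (by positivity : (0 : ℝ) ≤ m * T) ht hmT
    _ ≤ p ^ m * V 0 := hiter m
    _ ≤ p⁻¹ * Real.exp (-(-Real.log p / T) * t) * V 0 :=
        mul_le_mul_of_nonneg_right hpow (hV0 0 le_rfl)

section LinearConsensus

open Real Matrix MeasureTheory

variable {ι : Type*} [Fintype ι] {A : ℝ → Matrix ι ι ℝ} {x : ℝ → ι → ℝ}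

theorem antitoneOn_sup'_of_hasDerivAt_mulVec [Nonempty ι]
    (hA : ∀ t, 0 ≤ t → (A t).IsMetzlerZeroRowSum)
    (hx : ∀ t, 0 ≤ t → HasDerivAt x (A t *ᵥ x t) t) :
    AntitoneOn (fun t => univ.sup' univ_nonempty (x t)) (Ici 0) :=
  antitoneOn_sup'_of_hasDerivAt hx fun t ht _ hi => (hA t ht).mulVec_apply_nonpos_of_forall_le hi

theorem le_sup'_of_hasDerivAt_mulVec [Nonempty ι]
    (hA : ∀ t, 0 ≤ t → (A t).IsMetzlerZeroRowSum)
    (hx : ∀ t, 0 ≤ t → HasDerivAt x (A t *ᵥ x t) t) {t u : ℝ} (ht : 0 ≤ t) (htu : t ≤ u)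
    (j : ι) : x u j ≤ univ.sup' univ_nonempty (x t) :=
  (le_sup' (x u) (mem_univ j)).trans
    (antitoneOn_sup'_of_hasDerivAt_mulVec hA hx ht (ht.trans htu : (0 : ℝ) ≤ u) htu)

theorem integral_le_exp_mul_sub_sub (hx : ∀ t, 0 ≤ t → HasDerivAt x (A t *ᵥ x t) t)
    {K c t s : ℝ} (ht : 0 ≤ t) (hts : t ≤ s) (i : ι) {φ : ℝ → ℝ} (hφ : IntegrableOn φ (Icc t s))
    (hφle : ∀ u ∈ Ioo t s, φ u ≤ exp (K * (u - t)) * (K * (c - x u i) - (A u *ᵥ x u) i)) :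
    ∫ u in t..s, φ u ≤ exp (K * (s - t)) * (c - x s i) - (c - x t i) := by
  have hderiv : ∀ u, 0 ≤ u → HasDerivAt (fun u => exp (K * (u - t)) * (c - x u i))
      (exp (K * (u - t)) * (K * (c - x u i) - (A u *ᵥ x u) i)) u := by
    intro u hu
    have hexp : HasDerivAt (fun u => exp (K * (u - t))) (exp (K * (u - t)) * K) u := by
      simpa using ((hasDerivAt_id u).sub_const t).const_mul K |>.exp
    have hgap : HasDerivAt (fun u => c - x u i) (-(A u *ᵥ x u) i) u := by
      simpa using (hasDerivAt_pi.1 (hx u hu) i).const_sub c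
    exact (hexp.mul hgap).congr_deriv (by ring)
  have := intervalIntegral.integral_le_sub_of_hasDeriv_right_of_le hts
    (fun u hu => (hderiv u (ht.trans hu.1)).continuousAt.continuousWithinAt)
    (fun u hu => (hderiv u (ht.trans hu.1.le)).hasDerivWithinAt) hφ hφle
  simpa using this

theorem sup'_sub_le_exp_mul_sup'_sub [Nonempty ι]
    (hA : ∀ t, 0 ≤ t → (A t).IsMetzlerZeroRowSum)
    (hx : ∀ t, 0 ≤ t → HasDerivAt x (A t *ᵥ x t) t) {K : ℝ}
    (hK : ∀ t, 0 ≤ t → ∀ i, -A t i i ≤ K) {t s : ℝ} (ht : 0 ≤ t) (hts : t ≤ s) (i : ι) :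
    univ.sup' univ_nonempty (x t) - x t i
      ≤ exp (K * (s - t)) * (univ.sup' univ_nonempty (x t) - x s i) := by
  have := integral_le_exp_mul_sub_sub (φ := 0) hx ht hts i integrableOn_zero fun u hu =>
    mul_nonneg (exp_pos _).le <| sub_nonneg.2 <| (hA u (ht.trans hu.1.le)).mulVec_apply_le_mul_sub
      (le_sup'_of_hasDerivAt_mulVec hA hx ht hu.1.le) (hK u (ht.trans hu.1.le) i)
  simp only [Pi.zero_apply, intervalIntegral.integral_zero] at this
  linarith

theorem mul_sup'_sub_le_exp_mul_sup'_sub_of_ne [Nonempty ι]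
    (hA : ∀ t, 0 ≤ t → (A t).IsMetzlerZeroRowSum)
    (hx : ∀ t, 0 ≤ t → HasDerivAt x (A t *ᵥ x t) t) {K : ℝ}
    (hK : ∀ t, 0 ≤ t → ∀ i, -A t i i ≤ K) (hK0 : 0 ≤ K) (hcont : ContinuousOn A (Ici 0))
    {t T δ : ℝ} (ht : 0 ≤ t) (hT : 0 ≤ T) {i l : ι} (hil : i ≠ l)
    (hconn : δ ≤ ∫ s in t..(t + T), A s i l) :
    δ * (univ.sup' univ_nonempty (x t) - x t l)
      ≤ exp (2 * (K * T)) * (univ.sup' univ_nonempty (x t) - x (t + T) i) := by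
  set c := univ.sup' univ_nonempty (x t)
  set D := c - x t l
  have hD : 0 ≤ D := sub_nonneg.2 (le_sup' (x t) (mem_univ l))
  have hAil : ContinuousOn (fun u => A u i l) (Icc t (t + T)) :=
    ((continuous_apply_apply i l).comp_continuousOn hcont).mono fun u hu => ht.trans hu.1
  have hint := integral_le_exp_mul_sub_sub (K := K) (c := c)
    (φ := fun u => A u i l * (exp (-(K * T)) * D)) hx ht (by linarith) i
    (hAil.mul continuousOn_const).integrableOn_Icc fun u hu => by
      have hu0 : 0 ≤ u := ht.trans hu.1.le
      have hle := le_sup'_of_hasDerivAt_mulVec hA hx ht hu.1.le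
      have hzl : exp (-(K * T)) * D ≤ c - x u l := by
        rw [exp_neg, inv_mul_le_iff₀ (exp_pos _)]
        calc D ≤ exp (K * (u - t)) * (c - x u l) :=
              sup'_sub_le_exp_mul_sup'_sub hA hx hK ht hu.1.le l
          _ ≤ exp (K * T) * (c - x u l) := by
            gcongr
            · exact sub_nonneg.2 (hle l)
            · linarith [hu.2]
      calc A u i l * (exp (-(K * T)) * D) ≤ A u i l * (c - x u l) :=
            mul_le_mul_of_nonneg_left hzl ((hA u hu0).nonneg_of_ne i l hil)
        _ ≤ K * (c - x u i) - (A u *ᵥ x u) i :=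
            (hA u hu0).mul_sub_le_mul_sub_sub_mulVec_apply hle (hK u hu0 i) hil.symm
        _ ≤ exp (K * (u - t)) * (K * (c - x u i) - (A u *ᵥ x u) i) :=
            le_mul_of_one_le_left
              (sub_nonneg.2 ((hA u hu0).mulVec_apply_le_mul_sub hle (hK u hu0 i)))
              (one_le_exp (mul_nonneg hK0 (sub_nonneg.2 hu.1.le)))
  rw [intervalIntegral.integral_mul_const, add_sub_cancel_left] at hint
  have hzi : 0 ≤ c - x t i := sub_nonneg.2 (le_sup' (x t) (mem_univ i))
  have hgain : δ * (exp (-(K * T)) * D) ≤ exp (K * T) * (c - x (t + T) i) := by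
    nlinarith [mul_le_mul_of_nonneg_right hconn (mul_nonneg (exp_pos (-(K * T))).le hD)]
  calc δ * D = exp (K * T) * (δ * (exp (-(K * T)) * D)) := by
        rw [exp_neg]; field_simp
    _ ≤ exp (K * T) * (exp (K * T) * (c - x (t + T) i)) := by gcongr
    _ = exp (2 * (K * T)) * (c - x (t + T) i) := by
        rw [← mul_assoc, ← exp_add, two_mul]

theorem sup'_add_le_sup'_sub_mul [Nonempty ι]
    (hA : ∀ t, 0 ≤ t → (A t).IsMetzlerZeroRowSum)
    (hx : ∀ t, 0 ≤ t → HasDerivAt x (A t *ᵥ x t) t) {K : ℝ}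
    (hK : ∀ t, 0 ≤ t → ∀ i, -A t i i ≤ K) (hK0 : 0 ≤ K) (hcont : ContinuousOn A (Ici 0))
    {t T δ : ℝ} (ht : 0 ≤ t) (hT : 0 ≤ T) (l : ι)
    (hconn : ∀ i, i ≠ l → δ ≤ ∫ s in t..(t + T), A s i l) :
    univ.sup' univ_nonempty (x (t + T)) ≤ univ.sup' univ_nonempty (x t)
      - min δ 1 * exp (-(2 * (K * T))) * (univ.sup' univ_nonempty (x t) - x t l) := by
  set c := univ.sup' univ_nonempty (x t)
  have hD : 0 ≤ c - x t l := sub_nonneg.2 (le_sup' (x t) (mem_univ l))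
  refine sup'_le _ _ fun i _ => ?_
  have hgap : min δ 1 * (c - x t l) ≤ exp (2 * (K * T)) * (c - x (t + T) i) := by
    rcases eq_or_ne i l with rfl | hil
    · have hzi : 0 ≤ c - x (t + T) i :=
        sub_nonneg.2 (le_sup'_of_hasDerivAt_mulVec hA hx ht (by linarith) i)
      calc min δ 1 * (c - x t i) ≤ c - x t i := mul_le_of_le_one_left hD (min_le_right _ _)
        _ ≤ exp (K * (t + T - t)) * (c - x (t + T) i) :=
            sup'_sub_le_exp_mul_sup'_sub hA hx hK ht (by linarith) i
        _ ≤ exp (2 * (K * T)) * (c - x (t + T) i) :=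
            mul_le_mul_of_nonneg_right (exp_le_exp.2 (by nlinarith)) hzi
    · exact (mul_le_mul_of_nonneg_right (min_le_left _ _) hD).trans
        (mul_sup'_sub_le_exp_mul_sup'_sub_of_ne hA hx hK hK0 hcont ht hT hil (hconn i hil))
  have := mul_le_mul_of_nonneg_left hgap (exp_pos (-(2 * (K * T)))).le
  rw [← mul_assoc (exp _) (exp _), ← exp_add, neg_add_cancel, exp_zero, one_mul] at this
  linarith

theorem hasDerivAt_neg_of_hasDerivAt_mulVec
    (hx : ∀ t, 0 ≤ t → HasDerivAt x (A t *ᵥ x t) t) :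
    ∀ t, 0 ≤ t → HasDerivAt (-x) (A t *ᵥ (-x) t) t := fun t ht => by
  simpa [Matrix.mulVec_neg] using (hx t ht).neg

theorem antitoneOn_spread [Nonempty ι] (hA : ∀ t, 0 ≤ t → (A t).IsMetzlerZeroRowSum)
    (hx : ∀ t, 0 ≤ t → HasDerivAt x (A t *ᵥ x t) t) :
    AntitoneOn (fun t => spread (x t)) (Ici 0) :=
  (antitoneOn_sup'_of_hasDerivAt_mulVec hA hx).add
    (antitoneOn_sup'_of_hasDerivAt_mulVec hA (hasDerivAt_neg_of_hasDerivAt_mulVec hx))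

theorem spread_add_le_mul_spread [Nonempty ι]
    (hA : ∀ t, 0 ≤ t → (A t).IsMetzlerZeroRowSum)
    (hx : ∀ t, 0 ≤ t → HasDerivAt x (A t *ᵥ x t) t) {K : ℝ}
    (hK : ∀ t, 0 ≤ t → ∀ i, -A t i i ≤ K) (hK0 : 0 ≤ K) (hcont : ContinuousOn A (Ici 0))
    {t T δ : ℝ} (ht : 0 ≤ t) (hT : 0 ≤ T) (l : ι)
    (hconn : ∀ i, i ≠ l → δ ≤ ∫ s in t..(t + T), A s i l) :
    spread (x (t + T)) ≤ (1 - min δ 1 * exp (-(2 * (K * T)))) * spread (x t) := by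
  have hmax := sup'_add_le_sup'_sub_mul hA hx hK hK0 hcont ht hT l hconn
  have hmin := sup'_add_le_sup'_sub_mul hA (hasDerivAt_neg_of_hasDerivAt_mulVec hx) hK hK0 hcont
    ht hT l hconn
  rw [Pi.neg_apply, Pi.neg_apply, Pi.neg_apply] at hmin
  rw [spread, spread]
  linarith

end LinearConsensus

theorem stmt14_general {n : ℕ} (A : ℝ → Matrix (Fin n) (Fin n) ℝ)
    (hcont : ContinuousOn A (Set.Ici 0))
    (hbdd : ∃ M : ℝ, ∀ t, 0 ≤ t → ∀ i j, |A t i j| ≤ M)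
    (hmetzler : ∀ t, 0 ≤ t → ∀ i j, i ≠ j → 0 ≤ A t i j)
    (hrow : ∀ t, 0 ≤ t → ∀ i, ∑ j, A t i j = 0)
    (l : Fin n) (δ T : ℝ) (hδ : 0 < δ) (hT : 0 < T)
    (hconn : ∀ t, 0 ≤ t → ∀ i, i ≠ l → δ ≤ ∫ s in t..(t + T), A s i l)
    (x : ℝ → Fin n → ℝ)
    (hx : ∀ t, 0 ≤ t → HasDerivAt x ((A t).mulVec (x t)) t) :
    ∃ k lam : ℝ, 0 < k ∧ 0 < lam ∧
      ∀ t, 0 ≤ t → ∀ i j,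
        |x t i - x t j| ≤
          k * Real.exp (-lam * t) * ⨆ p : Fin n × Fin n, |x 0 p.1 - x 0 p.2| := by
  have : Nonempty (Fin n) := ⟨l⟩
  obtain ⟨K, hK⟩ := hbdd
  have hA : ∀ t, 0 ≤ t → (A t).IsMetzlerZeroRowSum := fun t ht => ⟨hmetzler t ht, hrow t ht⟩
  have hKdiag : ∀ t, 0 ≤ t → ∀ i, -A t i i ≤ K := fun t ht i => (neg_le_abs _).trans (hK t ht i i)
  have hK0 : 0 ≤ K := (abs_nonneg _).trans (hK 0 le_rfl l l)
  obtain ⟨k, lam, hk, hlam, hdecay⟩ := exists_exp_decay_of_antitoneOn hT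
    (sub_lt_self 1 (mul_pos (lt_min hδ one_pos) (Real.exp_pos _))) (antitoneOn_spread hA hx)
    (fun t _ => spread_nonneg (x t))
    (fun t ht => spread_add_le_mul_spread hA hx hKdiag hK0 hcont ht hT.le l (hconn t ht))
  refine ⟨k, lam, hk, hlam, fun t ht i j => ?_⟩
  calc |x t i - x t j| ≤ spread (x t) := abs_sub_le_spread (x t) i j
    _ ≤ k * Real.exp (-lam * t) * spread (x 0) := hdecay t ht
    _ ≤ k * Real.exp (-lam * t) * ⨆ p : Fin n × Fin n, |x 0 p.1 - x 0 p.2| := by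
        gcongr
        exact spread_le_iSup_abs_sub (x 0)

/-- Moreau's theorem: an LTV system `x' = A(t)x` with `A(t)` Metzler with
zero row sums, continuous and uniformly bounded on `[0,∞)`, satisfying the accumulated
connectivity condition `∫_t^{t+T} A(s)_{iℓ} ds ≥ δ` for all `i ≠ ℓ` and `t ≥ 0`,
achieves exponential consensus. -/
theorem stmt14 {n : ℕ} (hn : 1 ≤ n) (A : ℝ → Matrix (Fin n) (Fin n) ℝ)
    (hcont : ContinuousOn A (Set.Ici 0))
    (hbdd : ∃ M : ℝ, ∀ t, 0 ≤ t → ∀ i j, |A t i j| ≤ M)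
    (hmetzler : ∀ t, 0 ≤ t → ∀ i j, i ≠ j → 0 ≤ A t i j)
    (hrow : ∀ t, 0 ≤ t → ∀ i, ∑ j, A t i j = 0)
    (l : Fin n) (δ T : ℝ) (hδ : 0 < δ) (hT : 0 < T)
    (hconn : ∀ t, 0 ≤ t → ∀ i, i ≠ l → δ ≤ ∫ s in t..(t + T), A s i l)
    (x : ℝ → Fin n → ℝ)
    (hx : ∀ t, 0 ≤ t → HasDerivAt x ((A t).mulVec (x t)) t) :
    ∃ k lam : ℝ, 0 < k ∧ 0 < lam ∧
      ∀ t, 0 ≤ t → ∀ i j,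
        |x t i - x t j| ≤
          k * Real.exp (-lam * t) * ⨆ p : Fin n × Fin n, |x 0 p.1 - x 0 p.2| :=
  stmt14_general A hcont hbdd hmetzler hrow l δ T hδ hT hconn x hx
end

section
/- (Forward invariance of boxes.) Let n ≥ 1 and let A : [0,∞) × ℝⁿ → ℝ^{n×n} be continuous, such that for every (t,y), A(t,y)_{ij} ≥ 0 for all i ≠ j and Σ_j A(t,y)_{ij} = 0 for every row i. Let a ≤ b be real numbers and let x : [0,∞) → ℝⁿ be differentiable with x′(t) = A(t, x(t))·x(t) for all t ≥ 0. If a ≤ x_i(0) ≤ b for every i, then a ≤ x_i(t) ≤ b for every i and every t ≥ 0; in other words, the box [a,b]ⁿ is forward invariant. -/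
/-!
Both bounds say that the largest coordinate of `x(t)` cannot increase (the lower bound is
the same statement for `-x`, which solves the same linear equation). At a time where
coordinate `i` is maximal, zero row sums turn `(A x)_i` into `∑ⱼ A_ij (x_j - x_i)`, which is
`≤ 0` because `A` is Metzler; so every coordinate realising the maximum has nonpositive
derivative, hence so does the maximum in the sense of right Dini derivatives, and a
comparison with a constant finishes the argument.
-/

open Filter Set Topology Matrix

structure Matrix.IsMetzlerZeroRowSum_s16 {ι : Type*} [Fintype ι] (M : Matrix ι ι ℝ) : Prop where
  nonneg_of_ne : ∀ i j, i ≠ j → 0 ≤ M i j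
  sum_row_eq_zero : ∀ i, ∑ j, M i j = 0

theorem eventually_slope_finset_sup'_lt {ι : Type*} {s : Finset ι} (hs : s.Nonempty)
    {g : ι → ℝ → ℝ} {g' : ι → ℝ} {t r : ℝ}
    (hg : ∀ i ∈ s, HasDerivWithinAt (g i) (g' i) (Ici t) t)
    (hr : ∀ i ∈ s, g i t = s.sup' hs (g · t) → g' i < r) :
    ∀ᶠ z in 𝓝[>] t, slope (fun z ↦ s.sup' hs (g · z)) t z < r := by
  set m := s.sup' hs (g · t)
  have key : ∀ i ∈ s, ∀ᶠ z in 𝓝[>] t, g i z < m + r * (z - t) := by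
    intro i hi
    rcases (s.le_sup' (g · t) hi).eq_or_lt with hact | hlt
    · have hslope : Tendsto (slope (g i) t) (𝓝[>] t) (𝓝 (g' i)) :=
        (hasDerivWithinAt_iff_tendsto_slope' (lt_irrefl t)).1
          ((hg i hi).mono Ioi_subset_Ici_self)
      filter_upwards [hslope.eventually (gt_mem_nhds (hr i hi hact)), self_mem_nhdsWithin]
        with z hz (hzt : t < z)
      rw [slope_def_field, div_lt_iff₀ (sub_pos.2 hzt), hact] at hz
      linarith
    · have hcont : ContinuousWithinAt (fun z ↦ g i z - r * (z - t)) (Ici t) t :=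
        (hg i hi).continuousWithinAt.sub (by fun_prop)
      have := hcont.eventually_lt continuousWithinAt_const (by simpa using hlt)
      filter_upwards [nhdsWithin_mono t Ioi_subset_Ici_self this] with z hz
      linarith
  filter_upwards [(eventually_all_finset s).2 key, self_mem_nhdsWithin] with z hz (hzt : t < z)
  rw [slope_def_field, div_lt_iff₀ (sub_pos.2 hzt), sub_lt_iff_lt_add', Finset.sup'_lt_iff]
  exact hz

theorem Matrix.mulVec_apply_nonpos_of_forall_le {ι : Type*} [Fintype ι] {M : Matrix ι ι ℝ}
    {v : ι → ℝ} {i : ι} (hM : ∀ j, i ≠ j → 0 ≤ M i j) (hrow : ∑ j, M i j = 0)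
    (hv : ∀ j, v j ≤ v i) :
    (M *ᵥ v) i ≤ 0 := by
  have h : (M *ᵥ v) i = ∑ j, M i j * (v j - v i) := by
    simp only [mulVec, dotProduct, mul_sub, Finset.sum_sub_distrib, ← Finset.sum_mul, hrow,
      zero_mul, sub_zero]
  rw [h]
  refine Finset.sum_nonpos fun j _ ↦ ?_
  rcases eq_or_ne i j with rfl | hij
  · simp
  · exact mul_nonpos_of_nonneg_of_nonpos (hM j hij) (sub_nonpos.2 (hv j))

section MetzlerODE

variable {ι : Type*} [Fintype ι] {M : ℝ → Matrix ι ι ℝ} {x : ℝ → ι → ℝ} {t₀ T c : ℝ}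

theorem apply_le_of_hasDerivWithinAt_mulVec_metzler
    (hM : ∀ t ∈ Ico t₀ T, (M t).IsMetzlerZeroRowSum_s16) (hxc : ContinuousOn x (Icc t₀ T))
    (hx : ∀ t ∈ Ico t₀ T, HasDerivWithinAt x (M t *ᵥ x t) (Ici t) t)
    (h₀ : ∀ i, x t₀ i ≤ c) :
    ∀ t ∈ Icc t₀ T, ∀ i, x t i ≤ c := by
  intro t ht i
  have hne : (Finset.univ : Finset ι).Nonempty := ⟨i, Finset.mem_univ i⟩
  let f : ℝ → ℝ := fun s ↦ Finset.univ.sup' hne (x s ·)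
  suffices f t ≤ c from (Finset.le_sup' (x t ·) (Finset.mem_univ i)).trans this
  refine image_le_of_liminf_slope_right_le_deriv_boundary (B := fun _ ↦ c) (B' := fun _ ↦ 0)
    ?_ (Finset.sup'_le _ _ fun j _ ↦ h₀ j) continuousOn_const
    (fun _ _ ↦ hasDerivWithinAt_const _ _ _) ?_ ht
  · exact ContinuousOn.finset_sup'_apply hne fun j _ ↦ (continuous_apply j).comp_continuousOn hxc
  · intro s hs r hr
    refine (eventually_slope_finset_sup'_lt hne (fun j _ ↦ (hasDerivWithinAt_pi.1 (hx s hs)) j)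
      fun j _ hj ↦ ?_).frequently
    have hmax : ∀ k, x s k ≤ x s j := fun k ↦ hj ▸ Finset.le_sup' (x s ·) (Finset.mem_univ k)
    exact ((M s).mulVec_apply_nonpos_of_forall_le ((hM s hs).nonneg_of_ne j)
      ((hM s hs).sum_row_eq_zero j) hmax).trans_lt hr

theorem le_apply_of_hasDerivWithinAt_mulVec_metzler
    (hM : ∀ t ∈ Ico t₀ T, (M t).IsMetzlerZeroRowSum_s16) (hxc : ContinuousOn x (Icc t₀ T))
    (hx : ∀ t ∈ Ico t₀ T, HasDerivWithinAt x (M t *ᵥ x t) (Ici t) t)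
    (h₀ : ∀ i, c ≤ x t₀ i) :
    ∀ t ∈ Icc t₀ T, ∀ i, c ≤ x t i := by
  have hneg : ∀ t ∈ Ico t₀ T, HasDerivWithinAt (-x) (M t *ᵥ (-x) t) (Ici t) t := fun t ht ↦ by
    simpa only [Pi.neg_apply, Matrix.mulVec_neg] using (hx t ht).neg
  intro t ht i
  simpa using apply_le_of_hasDerivWithinAt_mulVec_metzler (c := -c) hM hxc.neg hneg
    (fun i ↦ neg_le_neg (h₀ i)) t ht i

end MetzlerODE

theorem stmt16_general {n : ℕ} (A : ℝ → (Fin n → ℝ) → Matrix (Fin n) (Fin n) ℝ)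
    (hmetzler : ∀ t, 0 ≤ t → ∀ y, ∀ i j, i ≠ j → 0 ≤ A t y i j)
    (hrow : ∀ t, 0 ≤ t → ∀ y i, ∑ j, A t y i j = 0)
    (a b : ℝ)
    (x : ℝ → Fin n → ℝ)
    (hx : ∀ t, 0 ≤ t → HasDerivAt x ((A t (x t)).mulVec (x t)) t)
    (h0 : ∀ i, a ≤ x 0 i ∧ x 0 i ≤ b) :
    ∀ t, 0 ≤ t → ∀ i, a ≤ x t i ∧ x t i ≤ b := by
  intro T hT i
  have hM : ∀ t ∈ Ico 0 T, (A t (x t)).IsMetzlerZeroRowSum_s16 :=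
    fun t ht ↦ ⟨hmetzler t ht.1 (x t), hrow t ht.1 (x t)⟩
  have hxc : ContinuousOn x (Icc 0 T) := fun t ht ↦ (hx t ht.1).continuousAt.continuousWithinAt
  have hx' : ∀ t ∈ Ico 0 T, HasDerivWithinAt x (A t (x t) *ᵥ x t) (Ici t) t :=
    fun t ht ↦ (hx t ht.1).hasDerivWithinAt
  have hT' : T ∈ Icc 0 T := ⟨hT, le_rfl⟩
  exact ⟨le_apply_of_hasDerivWithinAt_mulVec_metzler hM hxc hx' (fun j ↦ (h0 j).1) T hT' i,
    apply_le_of_hasDerivWithinAt_mulVec_metzler hM hxc hx' (fun j ↦ (h0 j).2) T hT' i⟩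

/-- forward invariance of boxes: if `A(t,y)` is Metzler with zero row
sums and continuous, then every box `[a,b]ⁿ` is forward invariant for
`x' = A(t,x(t))·x(t)`. -/
theorem stmt16 {n : ℕ} (hn : 1 ≤ n) (A : ℝ → (Fin n → ℝ) → Matrix (Fin n) (Fin n) ℝ)
    (hcont : ContinuousOn (fun p : ℝ × (Fin n → ℝ) => A p.1 p.2) (Set.Ici 0 ×ˢ Set.univ))
    (hmetzler : ∀ t, 0 ≤ t → ∀ y, ∀ i j, i ≠ j → 0 ≤ A t y i j)
    (hrow : ∀ t, 0 ≤ t → ∀ y i, ∑ j, A t y i j = 0)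
    (a b : ℝ) (hab : a ≤ b)
    (x : ℝ → Fin n → ℝ)
    (hx : ∀ t, 0 ≤ t → HasDerivAt x ((A t (x t)).mulVec (x t)) t)
    (h0 : ∀ i, a ≤ x 0 i ∧ x 0 i ≤ b) :
    ∀ t, 0 ≤ t → ∀ i, a ≤ x t i ∧ x t i ≤ b :=
  stmt16_general A hmetzler hrow a b x hx h0
end

section
/- (Exponential consensus of time-varying Kuramoto oscillators, Example of the paper.) Let n ≥ 1, let a, b be reals with 0 ≤ b − a < π, and let a_{ij} : [0,∞) → [0,∞) for i, j ∈ {1,…,n} be continuous and uniformly bounded. Let θ : [0,∞) → ℝⁿ be differentiable with θ(t) ∈ [a,b]ⁿ for all t ≥ 0 and θ′_i(t) = Σ_{j=1}^{n} a_{ij}(t)·sin(θ_j(t) − θ_i(t)) for every i and t ≥ 0. Suppose there exist an index ℓ, δ > 0 and T > 0 such that ∫_t^{t+T} a_{iℓ}(s) ds ≥ δ for every i ≠ ℓ and every t ≥ 0. Then there exist constants k, λ > 0 such that max_{i,j} |θ_i(t) − θ_j(t)| ≤ k·e^{−λt}·max_{i,j} |θ_i(0) − θ_j(0)| for all t ≥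 0. -/
/-!
The largest phase never increases and the smallest never decreases: an oscillator at the top
feels only pulls towards smaller phases, because `sin ≤ 0` on `[-π, 0]`. Fix a window
`[s, s + T]` and let `M` be the largest phase at time `s`. By Grönwall, the gap `M - θ_l` shrinks
at rate at most `K` (a bound on the row sums of the weights). Since `sin x ≥ (sin d / d) x` on
`[0, d]`, every other oscillator is pulled towards `θ_l`, with integrated strength at least `δ`,
and so ends the window a fixed fraction `ρ` of `M - θ_l(s)` below `M`. Applying the same argument
to `-θ` shows that the spread of the phases shrinks by the factor `1 - ρ` in every window.
-/

open Real Set Filter Topology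

theorem Real.sin_div_mul_le_sin {d x : ℝ} (hd : 0 < d) (hdπ : d ≤ π) (hx₀ : 0 ≤ x)
    (hxd : x ≤ d) : sin d / d * x ≤ sin x := by
  have key := strictConcaveOn_sin_Icc.concaveOn.2 ⟨hd.le, hdπ⟩ ⟨le_rfl, pi_pos.le⟩
    (div_nonneg hx₀ hd.le) (sub_nonneg.2 ((div_le_one hd).2 hxd)) (add_sub_cancel _ _)
  simp only [smul_eq_mul, mul_zero, add_zero, sin_zero, div_mul_cancel₀ x hd.ne'] at key
  calc sin d / d * x = x / d * sin d := by ring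
    _ ≤ sin x := key

theorem Real.sin_sub_le_sub_sub_mul_sub {d x y M : ℝ} (hd : 0 < d) (hdπ : d ≤ π) (hxM : x ≤ M)
    (hyM : y ≤ M) (hxy : x - y ≤ d) : sin (y - x) ≤ (M - x) - sin d / d * (M - y) := by
  have hc : sin d / d ≤ 1 := (div_le_one hd).2 (sin_le hd.le)
  rcases le_total x y with h | h
  · nlinarith [sin_le (sub_nonneg.2 h), mul_nonneg (sub_nonneg.2 hc) (sub_nonneg.2 hyM)]
  · have := sin_div_mul_le_sin hd hdπ (sub_nonneg.2 h) hxy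
    rw [← neg_sub, sin_neg]
    nlinarith [mul_nonneg (sub_nonneg.2 hc) (sub_nonneg.2 hxM)]

theorem eventually_slope_sup'_lt {ι : Type*} [Fintype ι] [Nonempty ι] {f : ι → ℝ → ℝ}
    {f' : ι → ℝ} {x r : ℝ} (hf : ∀ i, HasDerivAt (f i) (f' i) x)
    (hmax : ∀ i, (∀ j, f j x ≤ f i x) → f' i < r) :
    ∀ᶠ z in 𝓝[>] x, slope (fun y => Finset.univ.sup' Finset.univ_nonempty (f · y)) x z < r := by
  set g := fun y => Finset.univ.sup' Finset.univ_nonempty (f · y)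
  have hlt : ∀ i, ∀ᶠ z in 𝓝[>] x, f i z < g x + r * (z - x) := by
    intro i
    by_cases hi : ∀ j, f j x ≤ f i x
    · have hgi : g x = f i x := le_antisymm (Finset.sup'_le _ _ fun j _ => hi j)
        (Finset.le_sup' (f · x) (Finset.mem_univ i))
      filter_upwards [(hf i).hasDerivWithinAt.limsup_slope_le' (lt_irrefl x) (hmax i hi),
        self_mem_nhdsWithin] with z hz hxz
      rw [slope_def_field, div_lt_iff₀ (sub_pos.2 hxz)] at hz
      linarith
    · obtain ⟨j, hj⟩ := not_forall.1 hi
      have hcont : ContinuousAt (fun z => f i z - r * (z - x)) x :=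
        (hf i).continuousAt.sub (by fun_prop)
      have hlt : f i x - r * (x - x) < g x := by
        simpa using (not_le.1 hj).trans_le (Finset.le_sup' (f · x) (Finset.mem_univ j))
      filter_upwards [nhdsWithin_le_nhds (hcont.eventually_lt continuousAt_const hlt)] with z hz
      linarith
  filter_upwards [eventually_all.2 hlt, self_mem_nhdsWithin] with z hz hxz
  have : g z < g x + r * (z - x) := (Finset.sup'_lt_iff _).2 fun i _ => hz i
  rw [slope_def_field, div_lt_iff₀ (sub_pos.2 hxz)]
  linarith

theorem le_of_hasDerivAt_nonpos_of_isMax {ι : Type*} [Fintype ι] {f f' : ι → ℝ → ℝ}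
    {s t M : ℝ} (hst : s ≤ t) (hf : ∀ x ∈ Icc s t, ∀ i, HasDerivAt (f i) (f' i x) x)
    (hmax : ∀ x ∈ Ico s t, ∀ i, (∀ j, f j x ≤ f i x) → f' i x ≤ 0)
    (hM : ∀ i, f i s ≤ M) (i : ι) : f i t ≤ M := by
  have : Nonempty ι := ⟨i⟩
  have hg := image_le_of_liminf_slope_right_le_deriv_boundary (B := fun _ => M) (B' := 0)
    (ContinuousOn.finset_sup'_apply Finset.univ_nonempty fun j _ x hx =>
      (hf x hx j).continuousAt.continuousWithinAt)
    (Finset.sup'_le _ _ fun j _ => hM j) continuousOn_const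
    (fun x _ => hasDerivWithinAt_const _ _ _)
    (fun x hx r hr => (eventually_slope_sup'_lt (hf x (Ico_subset_Icc_self hx))
      fun i hi => (hmax x hx i hi).trans_lt hr).frequently) ⟨hst, le_rfl⟩
  exact (Finset.le_sup' (f · t) (Finset.mem_univ i)).trans hg

theorem exp_neg_mul_mul_add_integral_le {u u' v : ℝ → ℝ} {K t₀ t₁ : ℝ} (hK : 0 ≤ K)
    (ht : t₀ ≤ t₁) (hv : Continuous v) (hv₀ : ∀ t ∈ Icc t₀ t₁, 0 ≤ v t)
    (hu : ∀ t ∈ Icc t₀ t₁, HasDerivAt u (u' t) t)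
    (hu' : ∀ t ∈ Icc t₀ t₁, v t - K * u t ≤ u' t) :
    exp (-(K * (t₁ - t₀))) * (u t₀ + ∫ t in t₀..t₁, v t) ≤ u t₁ := by
  set G := fun t => u t * exp (K * (t - t₀)) - ∫ s in t₀..t, v s
  have hG : ∀ t ∈ Icc t₀ t₁,
      HasDerivAt G ((u' t + K * u t) * exp (K * (t - t₀)) - v t) t := by
    intro t ht
    have hexp : HasDerivAt (fun s => exp (K * (s - t₀))) (exp (K * (t - t₀)) * K) t := by
      simpa using (((hasDerivAt_id t).sub_const t₀).const_mul K).exp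
    exact (((hu t ht).mul hexp).sub (hv.integral_hasStrictDerivAt t₀ t).hasDerivAt).congr_deriv
      (by ring)
  -- `G' ≥ v (exp (K (t - t₀)) - 1) ≥ 0`
  have hmono : G t₀ ≤ G t₁ := monotoneOn_of_hasDerivWithinAt_nonneg (convex_Icc t₀ t₁)
    (fun t ht => (hG t ht).continuousAt.continuousWithinAt)
    (fun t ht => (hG t (interior_subset ht)).hasDerivWithinAt)
    (fun t ht => by
      have ht' := interior_subset ht
      have h1 : 1 ≤ exp (K * (t - t₀)) := one_le_exp (mul_nonneg hK (sub_nonneg.2 ht'.1))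
      nlinarith [mul_le_mul_of_nonneg_right (hu' t ht') (exp_pos (K * (t - t₀))).le,
        mul_nonneg (hv₀ t ht') (sub_nonneg.2 h1)])
    (left_mem_Icc.2 ht) (right_mem_Icc.2 ht) ht
  simp only [G, sub_self, mul_zero, exp_zero, mul_one, intervalIntegral.integral_same,
    sub_zero] at hmono
  calc exp (-(K * (t₁ - t₀))) * (u t₀ + ∫ t in t₀..t₁, v t)
      ≤ exp (-(K * (t₁ - t₀))) * (u t₁ * exp (K * (t₁ - t₀))) := by gcongr; linarith
    _ = u t₁ := by rw [mul_left_comm, ← exp_add, neg_add_cancel, exp_zero, mul_one]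

theorem exists_exp_decay_of_le_mul {D : ℝ → ℝ} {q T : ℝ} (hT : 0 < T) (hq₀ : 0 < q)
    (hq₁ : q < 1) (hD : AntitoneOn D (Ici 0)) (hD₀ : 0 ≤ D 0)
    (hstep : ∀ t, 0 ≤ t → D (t + T) ≤ q * D t) :
    ∃ k lam : ℝ, 0 < k ∧ 0 < lam ∧ ∀ t, 0 ≤ t → D t ≤ k * exp (-lam * t) * D 0 := by
  have hiter : ∀ k : ℕ, D (k * T) ≤ q ^ k * D 0 := by
    intro k
    induction k with
    | zero => simp
    | succ k ih =>
      calc D ((k + 1 : ℕ) * T) = D (k * T + T) := by push_cast; ring_nf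
        _ ≤ q * D (k * T) := hstep _ (by positivity)
        _ ≤ q ^ (k + 1) * D 0 := by rw [pow_succ', mul_assoc]; gcongr
  have hlog := log_neg hq₀ hq₁
  refine ⟨q⁻¹, -log q / T, inv_pos.2 hq₀, div_pos (neg_pos.2 hlog) hT, fun t ht => ?_⟩
  set k := ⌊t / T⌋₊
  have hkT : k * T ≤ t := (le_div_iff₀ hT).1 (Nat.floor_le (div_nonneg ht hT.le))
  have hk : t / T - 1 ≤ k := by linarith [Nat.lt_floor_add_one (t / T)]
  have hqk : q ^ k ≤ q⁻¹ * exp (-(-log q / T) * t) :=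
    calc q ^ k = exp (log q * k) := by rw [← rpow_natCast, rpow_def_of_pos hq₀]
      _ ≤ exp (log q * (t / T - 1)) := exp_le_exp.2 (mul_le_mul_of_nonpos_left hk hlog.le)
      _ = q⁻¹ * exp (-(-log q / T) * t) := by
        rw [← exp_log (inv_pos.2 hq₀), log_inv, ← exp_add]
        congr 1
        field_simp
        ring
  calc D t ≤ D (k * T) := hD (mem_Ici.2 (by positivity)) (mem_Ici.2 ht) hkT
    _ ≤ q ^ k * D 0 := hiter k
    _ ≤ q⁻¹ * exp (-(-log q / T) * t) * D 0 := mul_le_mul_of_nonneg_right hqk hD₀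

namespace Kuramoto

variable {ι : Type*}

noncomputable def spread (x : ι → ℝ) : ℝ := ⨆ p : ι × ι, |x p.1 - x p.2|

theorem abs_sub_le_spread [Finite ι] (x : ι → ℝ) (i j : ι) : |x i - x j| ≤ spread x :=
  le_ciSup (f := fun p : ι × ι => |x p.1 - x p.2|) (Set.finite_range _).bddAbove (i, j)

theorem spread_nonneg [Finite ι] [Nonempty ι] (x : ι → ℝ) : 0 ≤ spread x :=
  (abs_nonneg _).trans (abs_sub_le_spread x (Classical.arbitrary ι) (Classical.arbitrary ι))

theorem spread_le_of_forall_sub_le [Nonempty ι] {x : ι → ℝ} {C : ℝ}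
    (h : ∀ i j, x i - x j ≤ C) : spread x ≤ C :=
  ciSup_le fun p => abs_sub_le_iff.2 ⟨h p.1 p.2, h p.2 p.1⟩

theorem exists_forall_mem_Icc_sub_le_spread [Finite ι] [Nonempty ι] (x : ι → ℝ) :
    ∃ m M, (∀ i, x i ∈ Icc m M) ∧ M - m ≤ spread x := by
  obtain ⟨iMax, hiMax⟩ := Finite.exists_max x
  obtain ⟨iMin, hiMin⟩ := Finite.exists_min x
  exact ⟨x iMin, x iMax, fun i => ⟨hiMin i, hiMax i⟩,
    (le_abs_self _).trans (abs_sub_le_spread x _ _)⟩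

theorem sum_mul_sin_sub_le [Fintype ι] {w x : ι → ℝ} {d K M : ℝ} (hd : 0 < d) (hdπ : d ≤ π)
    (hw : ∀ j, 0 ≤ w j) (hwK : ∑ j, w j ≤ K) (hxM : ∀ j, x j ≤ M) {i : ι}
    (hx : ∀ j, x i - x j ≤ d) (l : ι) :
    ∑ j, w j * sin (x j - x i) ≤ K * (M - x i) - sin d / d * (w l * (M - x l)) := by
  have hc : 0 ≤ sin d / d := div_nonneg (sin_nonneg_of_nonneg_of_le_pi hd.le hdπ) hd.le
  calc ∑ j, w j * sin (x j - x i)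
      ≤ ∑ j, (w j * (M - x i) - sin d / d * (w j * (M - x j))) := by
        gcongr with j
        nlinarith [sin_sub_le_sub_sub_mul_sub hd hdπ (hxM i) (hxM j) (hx j), hw j]
    _ = (∑ j, w j) * (M - x i) - sin d / d * ∑ j, w j * (M - x j) := by
        rw [Finset.sum_sub_distrib, Finset.sum_mul, Finset.mul_sum]
    _ ≤ K * (M - x i) - sin d / d * (w l * (M - x l)) := by
        gcongr
        · exact sub_nonneg.2 (hxM i)
        · exact Finset.single_le_sum (fun j _ => mul_nonneg (hw j) (sub_nonneg.2 (hxM j)))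
            (Finset.mem_univ l)

-- The box `[a, b]ⁿ` is recorded only through the bound `d` on phase differences, which, unlike
-- the box, is invariant under `θ ↦ -θ`.
structure IsSolution [Fintype ι] (w : ι → ι → ℝ → ℝ) (d : ℝ) (θ : ℝ → ι → ℝ) : Prop where
  weight_nonneg : ∀ i j t, 0 ≤ t → 0 ≤ w i j t
  hasDerivAt : ∀ t, 0 ≤ t → ∀ i, HasDerivAt (θ · i) (∑ j, w i j t * sin (θ t j - θ t i)) t
  sub_le : ∀ t, 0 ≤ t → ∀ i j, θ t i - θ t j ≤ d

namespace IsSolution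

variable [Fintype ι] {w : ι → ι → ℝ → ℝ} {d : ℝ} {θ : ℝ → ι → ℝ}

theorem neg (h : IsSolution w d θ) : IsSolution w d (-θ) where
  weight_nonneg := h.weight_nonneg
  hasDerivAt t ht i := by
    refine (h.hasDerivAt t ht i).neg.congr_deriv ?_
    simp only [Pi.neg_apply, neg_sub_neg, ← Finset.sum_neg_distrib, ← mul_neg, ← sin_neg,
      neg_sub]
  sub_le t ht i j := by simpa only [Pi.neg_apply, neg_sub_neg] using h.sub_le t ht j i

theorem le_of_forall_le (h : IsSolution w d θ) (hdπ : d ≤ π) {s t M : ℝ} (hs : 0 ≤ s)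
    (hst : s ≤ t) (hM : ∀ j, θ s j ≤ M) (i : ι) : θ t i ≤ M :=
  le_of_hasDerivAt_nonpos_of_isMax hst (fun x hx => h.hasDerivAt x (hs.trans hx.1))
    (fun x hx i hi => Finset.sum_nonpos fun j _ =>
      mul_nonpos_of_nonneg_of_nonpos (h.weight_nonneg i j x (hs.trans hx.1))
        (sin_nonpos_of_nonpos_of_neg_pi_le (sub_nonpos.2 (hi j))
          (by linarith [h.sub_le x (hs.trans hx.1) i j])))
    hM i

theorem mem_Icc_of_forall_mem_Icc (h : IsSolution w d θ) (hdπ : d ≤ π) {s t m M : ℝ}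
    (hs : 0 ≤ s) (hst : s ≤ t) (hθ : ∀ j, θ s j ∈ Icc m M) (i : ι) : θ t i ∈ Icc m M :=
  ⟨by simpa using h.neg.le_of_forall_le hdπ hs hst (fun j => neg_le_neg (hθ j).1) i,
    h.le_of_forall_le hdπ hs hst (fun j => (hθ j).2) i⟩

theorem spread_le (h : IsSolution w d θ) (hdπ : d ≤ π) [Nonempty ι] {s t : ℝ} (hs : 0 ≤ s)
    (hst : s ≤ t) : spread (θ t) ≤ spread (θ s) := by
  obtain ⟨m, M, hθ, hmM⟩ := exists_forall_mem_Icc_sub_le_spread (θ s)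
  refine spread_le_of_forall_sub_le fun i j => ?_
  linarith [(h.mem_Icc_of_forall_mem_Icc hdπ hs hst hθ i).2,
    (h.mem_Icc_of_forall_mem_Icc hdπ hs hst hθ j).1]

theorem exp_neg_mul_sub_le_sub (h : IsSolution w d θ) (hd : 0 < d) (hdπ : d ≤ π) {K : ℝ}
    (hK₀ : 0 ≤ K) (hK : ∀ t, 0 ≤ t → ∀ i, ∑ j, w i j t ≤ K) {s t M : ℝ} (hs : 0 ≤ s)
    (hst : s ≤ t) (hM : ∀ j, θ s j ≤ M) (i : ι) :
    exp (-(K * (t - s))) * (M - θ s i) ≤ M - θ t i := by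
  simpa using exp_neg_mul_mul_add_integral_le (v := 0) hK₀ hst continuous_const
    (fun _ _ => le_rfl) (fun x hx => (h.hasDerivAt x (hs.trans hx.1) i).const_sub M)
    fun x hx => by
      have hx₀ := hs.trans hx.1
      have hxM := h.le_of_forall_le hdπ hs hx.1 hM
      have hc : 0 ≤ sin d / d * (w i i x * (M - θ x i)) :=
        mul_nonneg (div_nonneg (sin_nonneg_of_nonneg_of_le_pi hd.le hdπ) hd.le)
          (mul_nonneg (h.weight_nonneg i i x hx₀) (sub_nonneg.2 (hxM i)))
      have := sum_mul_sin_sub_le hd hdπ (h.weight_nonneg i · x hx₀) (hK x hx₀ i) hxM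
        (h.sub_le x hx₀ i) i
      simp only [Pi.zero_apply]
      linarith

theorem mul_sub_le_sub_of_le_integral (h : IsSolution w d θ) (hd : 0 < d) (hdπ : d ≤ π)
    (hw : ∀ i j, Continuous (w i j)) {K : ℝ} (hK₀ : 0 ≤ K)
    (hK : ∀ t, 0 ≤ t → ∀ i, ∑ j, w i j t ≤ K) {i l : ι} {s T δ M : ℝ} (hs : 0 ≤ s)
    (hT : 0 ≤ T) (hδ : δ ≤ ∫ t in s..(s + T), w i l t) (hM : ∀ j, θ s j ≤ M) :
    sin d / d * δ * exp (-(2 * (K * T))) * (M - θ s l) ≤ M - θ (s + T) i := by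
  set c := sin d / d
  have hc : 0 ≤ c := div_nonneg (sin_nonneg_of_nonneg_of_le_pi hd.le hdπ) hd.le
  set C := c * exp (-(K * T)) * (M - θ s l)
  have hC : 0 ≤ C := mul_nonneg (by positivity) (sub_nonneg.2 (hM l))
  have key := exp_neg_mul_mul_add_integral_le hK₀ (le_add_of_nonneg_right hT) ((hw i l).const_mul C)
    (fun x hx => mul_nonneg hC (h.weight_nonneg i l x (hs.trans hx.1)))
    (fun x hx => (h.hasDerivAt x (hs.trans hx.1) i).const_sub M) fun x hx => by
      have hx₀ := hs.trans hx.1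
      have hxM := h.le_of_forall_le hdπ hs hx.1 hM
      have hsum := sum_mul_sin_sub_le hd hdπ (h.weight_nonneg i · x hx₀) (hK x hx₀ i) hxM
        (h.sub_le x hx₀ i) l
      have hgap : exp (-(K * T)) * (M - θ s l) ≤ M - θ x l :=
        (mul_le_mul_of_nonneg_right (exp_le_exp.2 (by nlinarith [hx.2]))
          (sub_nonneg.2 (hM l))).trans (h.exp_neg_mul_sub_le_sub hd hdπ hK₀ hK hs hx.1 hM l)
      have : C * w i l x ≤ c * (w i l x * (M - θ x l)) := by
        have := mul_le_mul_of_nonneg_left hgap (mul_nonneg hc (h.weight_nonneg i l x hx₀))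
        linarith
      linarith
  rw [add_sub_cancel_left, intervalIntegral.integral_const_mul] at key
  calc c * δ * exp (-(2 * (K * T))) * (M - θ s l) = exp (-(K * T)) * (C * δ) := by
        rw [show -(2 * (K * T)) = -(K * T) + -(K * T) by ring, exp_add]; ring
    _ ≤ exp (-(K * T)) * ((M - θ s i) + C * ∫ t in s..(s + T), w i l t) := by
        have := mul_le_mul_of_nonneg_left hδ hC
        exact mul_le_mul_of_nonneg_left (by linarith [hM i]) (exp_pos _).le
    _ ≤ M - θ (s + T) i := key

theorem min_mul_sub_le_sub (h : IsSolution w d θ) (hd : 0 < d) (hdπ : d ≤ π)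
    (hw : ∀ i j, Continuous (w i j)) {K : ℝ} (hK₀ : 0 ≤ K)
    (hK : ∀ t, 0 ≤ t → ∀ i, ∑ j, w i j t ≤ K) {l : ι} {s T δ M : ℝ} (hs : 0 ≤ s) (hT : 0 ≤ T)
    (hconn : ∀ i, i ≠ l → δ ≤ ∫ t in s..(s + T), w i l t) (hM : ∀ j, θ s j ≤ M) (i : ι) :
    min (sin d / d * δ * exp (-(2 * (K * T)))) (exp (-(K * T))) * (M - θ s l)
      ≤ M - θ (s + T) i := by
  have hl := sub_nonneg.2 (hM l)
  by_cases hil : i = l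
  · subst hil
    calc _ ≤ exp (-(K * T)) * (M - θ s i) := mul_le_mul_of_nonneg_right (min_le_right _ _) hl
      _ ≤ M - θ (s + T) i := by
        simpa using h.exp_neg_mul_sub_le_sub hd hdπ hK₀ hK hs (le_add_of_nonneg_right hT) hM i
  · exact (mul_le_mul_of_nonneg_right (min_le_left _ _) hl).trans
      (h.mul_sub_le_sub_of_le_integral hd hdπ hw hK₀ hK hs hT (hconn i hil) hM)

theorem exists_spread_add_le_mul [Nonempty ι] (h : IsSolution w d θ) (hd : 0 < d)
    (hdπ : d < π) (hw : ∀ i j, Continuous (w i j)) {K : ℝ} (hK₀ : 0 < K)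
    (hK : ∀ t, 0 ≤ t → ∀ i, ∑ j, w i j t ≤ K) {l : ι} {δ T : ℝ} (hδ : 0 < δ) (hT : 0 < T)
    (hconn : ∀ t, 0 ≤ t → ∀ i, i ≠ l → δ ≤ ∫ s in t..(t + T), w i l s) :
    ∃ q, 0 < q ∧ q < 1 ∧ ∀ s, 0 ≤ s → spread (θ (s + T)) ≤ q * spread (θ s) := by
  set ρ := min (sin d / d * δ * exp (-(2 * (K * T)))) (exp (-(K * T)))
  have hρ₀ : 0 < ρ := lt_min (by have := sin_pos_of_pos_of_lt_pi hd hdπ; positivity) (exp_pos _)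
  have hρ₁ : ρ < 1 :=
    (min_le_right _ _).trans_lt (exp_lt_one_iff.2 (neg_neg_of_pos (mul_pos hK₀ hT)))
  refine ⟨1 - ρ, by linarith, by linarith, fun s hs => ?_⟩
  obtain ⟨m, M, hθ, hmM⟩ := exists_forall_mem_Icc_sub_le_spread (θ s)
  have hup := h.min_mul_sub_le_sub hd hdπ.le hw hK₀.le hK hs hT.le (hconn s hs)
    fun j => (hθ j).2
  have hlow := h.neg.min_mul_sub_le_sub hd hdπ.le hw hK₀.le hK hs hT.le (hconn s hs)
    (M := -m) fun j => neg_le_neg (hθ j).1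
  refine spread_le_of_forall_sub_le fun i j => ?_
  have hi := hup i
  have hj := hlow j
  simp only [Pi.neg_apply] at hj
  nlinarith [mul_le_mul_of_nonneg_left hmM (sub_nonneg.2 hρ₁.le)]

end IsSolution

end Kuramoto

/-- exponential consensus of time-varying Kuramoto oscillators:
a trajectory of `θ'_i = Σ_j a_{ij}(t)·sin(θ_j − θ_i)` that stays in a box `[a,b]ⁿ`
with `0 ≤ b − a < π`, with continuous, uniformly bounded, nonnegative weights
satisfying `∫_t^{t+T} a_{iℓ}(s) ds ≥ δ` for all `i ≠ ℓ` and `t ≥ 0`, achieves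
exponential consensus. -/
theorem stmt19 {n : ℕ} (hn : 1 ≤ n) (a b : ℝ) (hab0 : 0 ≤ b - a) (hab : b - a < π)
    (w : Fin n → Fin n → ℝ → ℝ)
    (hwcont : ∀ i j, Continuous (w i j))
    (hwnonneg : ∀ i j t, 0 ≤ t → 0 ≤ w i j t)
    (hwbdd : ∃ M : ℝ, ∀ i j t, 0 ≤ t → w i j t ≤ M)
    (θ : ℝ → Fin n → ℝ)
    (hbox : ∀ t, 0 ≤ t → ∀ i, θ t i ∈ Set.Icc a b)
    (hθ : ∀ t, 0 ≤ t →
      HasDerivAt θ (fun i => ∑ j, w i j t * Real.sin (θ t j - θ t i)) t)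
    (l : Fin n) (δ T : ℝ) (hδ : 0 < δ) (hT : 0 < T)
    (hconn : ∀ t, 0 ≤ t → ∀ i, i ≠ l → δ ≤ ∫ s in t..(t + T), w i l s) :
    ∃ k lam : ℝ, 0 < k ∧ 0 < lam ∧
      ∀ t, 0 ≤ t → ∀ i j,
        |θ t i - θ t j| ≤
          k * Real.exp (-lam * t) * ⨆ p : Fin n × Fin n, |θ 0 p.1 - θ 0 p.2| := by
  have : Nonempty (Fin n) := ⟨⟨0, hn⟩⟩
  -- taking `d > b - a` keeps the secant slope `sin d / d` positive even when `a = b`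
  obtain ⟨d, hd, hdπ, hbad⟩ : ∃ d, 0 < d ∧ d < π ∧ b - a ≤ d :=
    ⟨(b - a + π) / 2, by linarith [pi_pos], by linarith, by linarith⟩
  have hsol : Kuramoto.IsSolution w d θ :=
    { weight_nonneg := hwnonneg
      hasDerivAt := fun t ht => hasDerivAt_pi.1 (hθ t ht)
      sub_le := fun t ht i j => by linarith [(hbox t ht i).2, (hbox t ht j).1] }
  obtain ⟨M, hM⟩ := hwbdd
  have hK : ∀ t, 0 ≤ t → ∀ i, ∑ j, w i j t ≤ n * max M 0 + 1 := fun t ht i =>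
    calc ∑ j, w i j t ≤ ∑ _j : Fin n, max M 0 :=
          Finset.sum_le_sum fun j _ => (hM i j t ht).trans (le_max_left _ _)
      _ ≤ n * max M 0 + 1 := by simp
  obtain ⟨q, hq₀, hq₁, hstep⟩ :=
    hsol.exists_spread_add_le_mul hd hdπ hwcont (by positivity) hK hδ hT hconn
  obtain ⟨k, lam, hk, hlam, hdecay⟩ := exists_exp_decay_of_le_mul hT hq₀ hq₁
    (fun s hs t _ hst => hsol.spread_le hdπ.le hs hst) (Kuramoto.spread_nonneg _) hstep
  exact ⟨k, lam, hk, hlam, fun t ht i j =>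
    (Kuramoto.abs_sub_le_spread (θ t) i j).trans (hdecay t ht)⟩
end
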